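/- arXiv:1409.5056 — 7 statements merged into one kernel-verified Lean document; each statement's English description precedes it below -/
import Mathlib

section
/- If there exists an η-generating set, then there exists a real number c > 0 such that h(u) < c for every unit vector u ∈ ℝ². -/
open Filter Set

noncomputable section

/-- The plane `ℝ²`. -/
abbrev R2 := EuclideanSpace ℝ (Fin 2)

/-- The embedding of `ℤ²` into `ℝ²`. -/
def toR2 (p : ℤ × ℤ) : R2 := (WithLp.equiv 2 (Fin 2 → ℝ)).symm ![(p.1 : ℝ), (p.2 : ℝ)]

def e1 : R2 := (WithLp.equiv 2 (Fin 2 → ℝ)).symm ![1, 0]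
def e2 : R2 := (WithLp.equiv 2 (Fin 2 → ℝ)).symm ![0, 1]

variable {A : Type*}

/-- The translate `Tⁿη`. -/
def Tr (η : ℤ × ℤ → A) (n : ℤ × ℤ) : ℤ × ℤ → A := fun x => η (x + n)

/-- The number of distinct `η`-colorings of a set `S ⊆ ℤ²`. -/
def colorCount (η : ℤ × ℤ → A) (S : Set (ℤ × ℤ)) : ℕ :=
  Set.ncard {f : S → A | ∃ n : ℤ × ℤ, ∀ x : S, f x = η ((x : ℤ × ℤ) + n)}

/-- The integer points of a subset of the plane. -/
def latticePts (K : Set R2) : Set (ℤ × ℤ) := {p | toR2 p ∈ K}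

/-- The complexity `P_η(K)` for `K ⊆ ℝ²`. -/
def Pc (η : ℤ × ℤ → A) (K : Set R2) : ℕ := colorCount η (latticePts K)

/-- The rectangle complexity `P_η(n,k)`. -/
def Prect (η : ℤ × ℤ → A) (n k : ℕ) : ℕ :=
  colorCount η {p : ℤ × ℤ | 0 ≤ p.1 ∧ p.1 < (n : ℤ) ∧ 0 ≤ p.2 ∧ p.2 < (k : ℤ)}

/-- The `t`-neighborhood `[0, su]^(t)` of the segment `[0, su]`. -/
def segNbhd (u : R2) (s t : ℝ) : Set R2 :=
  {v | ∃ w ∈ segment ℝ (0 : R2) (s • u), dist v w < t}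

/-- The directional entropy `h(u)`. -/
def dirEnt (η : ℤ × ℤ → A) (u : R2) : EReal :=
  ⨆ t : Set.Ioi (0 : ℝ),
    Filter.limsup (fun s : ℝ => ((Real.log (Pc η (segNbhd u s (t : ℝ))) / s : ℝ) : EReal))
      Filter.atTop

/-- `f` agrees on `S` with some translate of `η`. -/
def IsColoring (η : ℤ × ℤ → A) (S : Set (ℤ × ℤ)) (f : ℤ × ℤ → A) : Prop :=
  ∃ n : ℤ × ℤ, ∀ x ∈ S, f x = η (x + n)

/-- The `η`-coloring `f` of `S` extends uniquely to an `η`-coloring of `T`. -/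
def ExtendsUniquely (η : ℤ × ℤ → A) (S T : Set (ℤ × ℤ)) (f : ℤ × ℤ → A) : Prop :=
  (∃ g, IsColoring η T g ∧ ∀ x ∈ S, g x = f x) ∧
    ∀ g g', IsColoring η T g → IsColoring η T g' →
      (∀ x ∈ S, g x = f x) → (∀ x ∈ S, g' x = f x) → ∀ x ∈ T, g x = g' x

/-- `S = conv(S) ∩ ℤ²`. -/
def IsLatticeConvex (S : Set (ℤ × ℤ)) : Prop :=
  ∀ p : ℤ × ℤ, toR2 p ∈ convexHull ℝ (toR2 '' S) → p ∈ S

/-- `x` is `η`-generated by `S`. -/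
def IsGenerated (η : ℤ × ℤ → A) (S : Set (ℤ × ℤ)) (x : ℤ × ℤ) : Prop :=
  ∀ f : ℤ × ℤ → A, IsColoring η (S \ {x}) f → ExtendsUniquely η (S \ {x}) S f

/-- `S` is an `η`-generating set. -/
def IsGeneratingSet (η : ℤ × ℤ → A) (S : Set (ℤ × ℤ)) : Prop :=
  S.Finite ∧ S.Nonempty ∧ IsLatticeConvex S ∧
    ∀ x ∈ S, toR2 x ∈ frontier (convexHull ℝ (toR2 '' S)) → IsGenerated η S x

/-- For `v = (v₁, v₂)`, `perp v = (v₂, -v₁)`. -/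
def perp (v : R2) : R2 := (WithLp.equiv 2 (Fin 2 → ℝ)).symm ![v 1, -(v 0)]

/-- `E_v(S)`: the integer points of the edge of `S` in direction `v`. -/
def edgeSet (v : R2) (S : Set (ℤ × ℤ)) : Set (ℤ × ℤ) :=
  {x ∈ S | ∀ y ∈ S, (inner ℝ (toR2 y) (perp v) : ℝ) ≤ inner ℝ (toR2 x) (perp v)}

/-- `x` is an endpoint of `E_v(S)`. -/
def IsEndpoint (v : R2) (S : Set (ℤ × ℤ)) (x : ℤ × ℤ) : Prop :=
  x ∈ edgeSet v S ∧ toR2 x ∉ convexHull ℝ (toR2 '' (edgeSet v S \ {x}))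

/-- `S` is `v`-balanced for `η`. -/
def IsBalanced (η : ℤ × ℤ → A) (v : R2) (S : Set (ℤ × ℤ)) : Prop :=
  S.Finite ∧ IsLatticeConvex S ∧ S ≠ edgeSet v S ∧
    (∀ x, IsEndpoint v S x → IsGenerated η S x) ∧
    colorCount η S < colorCount η (S \ edgeSet v S) + (edgeSet v S).ncard ∧
    ∀ w : R2, ({x ∈ S | ∃ c : ℝ, toR2 x = w + c • v}).Nonempty →
      (edgeSet v S).ncard ≤ ({x ∈ S | ∃ c : ℝ, toR2 x = w + c • v}).ncard + 1

/-- `J_{T,v,S}`. -/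
def Jset (v : R2) (S T : Set (ℤ × ℤ)) : Set (ℤ × ℤ) :=
  {j | ((fun x => x + j) '' S) \ T = (fun x => x + j) '' edgeSet v S}

/-- `J_{T,v,S,p}`: `J_{T,v,S}` with the `p` points nearest each endpoint removed. -/
def JsetP (v : R2) (S T : Set (ℤ × ℤ)) (p : ℕ) : Set (ℤ × ℤ) :=
  {j ∈ Jset v S T |
    p ≤ ({j' ∈ Jset v S T | (inner ℝ (toR2 j') v : ℝ) < inner ℝ (toR2 j) v}).ncard ∧
    p ≤ ({j' ∈ Jset v S T | (inner ℝ (toR2 j) v : ℝ) < inner ℝ (toR2 j') v}).ncard}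

/-- `ext¹_{v,S,p}(T)`. -/
def ext1 (v : R2) (S : Set (ℤ × ℤ)) (p : ℕ) (T : Set (ℤ × ℤ)) : Set (ℤ × ℤ) :=
  T ∪ ⋃ j ∈ JsetP v S T p, (fun x => x + j) '' S

/-- `ext^m_{v,S,p}(T)`. -/
def extN (v : R2) (S : Set (ℤ × ℤ)) (p : ℕ) (m : ℕ) (T : Set (ℤ × ℤ)) : Set (ℤ × ℤ) :=
  (ext1 v S p)^[m] T

/-- The border `∂_{v,S,p}(T)`. -/
def border (v : R2) (S : Set (ℤ × ℤ)) (p : ℕ) (T : Set (ℤ × ℤ)) : Set (ℤ × ℤ) :=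
  ⋃ j ∈ JsetP v S T p, (fun x => x + j) '' (S \ edgeSet v S)

/-- The integer points of the rectangle `[a,b] × [c,d]`. -/
def rect (a b c d : ℤ) : Set (ℤ × ℤ) := {p | a ≤ p.1 ∧ p.1 ≤ b ∧ c ≤ p.2 ∧ p.2 ≤ d}

/-- `f` is (the restriction to `T` of) an `(S,η)`-coloring. -/
def IsSColoringOf (η : ℤ × ℤ → A) (S T : Set (ℤ × ℤ)) (f : ℤ × ℤ → A) : Prop :=
  ∃ g : ℤ × ℤ → A, (∀ x ∈ T, g x = f x) ∧ ∀ j : ℤ × ℤ, IsColoring η ((fun x => x + j) '' S) g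

/-- `f|_R` extends uniquely to an `(S,η)`-coloring of `T`. -/
def ExtendsUniquelyS (η : ℤ × ℤ → A) (S R T : Set (ℤ × ℤ)) (f : ℤ × ℤ → A) : Prop :=
  (∃ g, IsSColoringOf η S T g ∧ ∀ x ∈ R, g x = f x) ∧
    ∀ g g', IsSColoringOf η S T g → IsSColoringOf η S T g' →
      (∀ x ∈ R, g x = f x) → (∀ x ∈ R, g' x = f x) → ∀ x ∈ T, g x = g' x

/-- `f` is vertically periodic on `X` with period `p`. -/
def VertPeriodicOn (f : ℤ × ℤ → A) (X : Set (ℤ × ℤ)) (p : ℤ) : Prop :=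
  ∀ q : ℤ × ℤ, q ∈ X → q + (0, p) ∈ X → f (q + (0, p)) = f q

/-- The thickness `τ_u(K)` of `K` in direction `u`. -/
def thickness (u : R2) (K : Set R2) : ℝ :=
  sSup {τ : ℝ | 0 ≤ τ ∧ ∃ n : ℤ × ℤ, (fun v => v + toR2 n) '' segment ℝ (0 : R2) (τ • u) ⊆ K}

/-- One-dimensional word complexity `P_α(n)`. -/
def wordCount (α : ℤ → A) (n : ℕ) : ℕ :=
  Set.ncard {w : Fin n → A | ∃ m : ℤ, ∀ j : Fin n, w j = α (m + (j : ℕ))}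

section Topological

variable [TopologicalSpace A]

/-- The orbit closure `X_η` in the product topology. -/
def Xeta (η : ℤ × ℤ → A) : Set (ℤ × ℤ → A) := closure {g | ∃ n : ℤ × ℤ, g = Tr η n}

/-- A line `ℓ ⊆ ℝ²` is expansive for `X_η`. -/
def IsExpansiveLine (η : ℤ × ℤ → A) (ℓ : Set R2) : Prop :=
  ∃ r > 0, ∀ x ∈ Xeta η, ∀ y ∈ Xeta η,
    (∀ n : ℤ × ℤ, Metric.infDist (toR2 n) ℓ < r → x n = y n) → x = y

/-- The line through the origin in direction `u`. -/
def lineThrough (u : R2) : Set R2 := {v | ∃ c : ℝ, v = c • u}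

open Classical in
/-- The metric `ρ` on `𝒜^{ℤ²}`. -/
def rho (x y : ℤ × ℤ → A) : ℝ :=
  if x = y then 0
  else (2 : ℝ) ^ (-(sInf {r : ℝ | ∃ m : ℤ × ℤ, x m ≠ y m ∧ ‖toR2 m‖ = r}))

/-- The covering number `N_T(E, ε)`. -/
def Ncount (η : ℤ × ℤ → A) (E : Set R2) (ε : ℝ) : ℕ :=
  sInf {c : ℕ | ∃ Y : Finset (ℤ × ℤ → A), Y.card = c ∧ ↑Y ⊆ Xeta η ∧
    ∀ x ∈ Xeta η, ∃ y ∈ Y, ∀ n : ℤ × ℤ, toR2 n ∈ E → rho (Tr x n) (Tr y n) < ε}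

end Topological

end

/-!
Let `x₀` be the point of `S` at which `φ(y) = N y₁ + y₂` is strictly maximal (for `N` large).
It lies on the boundary of `conv S`, so it is generated by `S`: on every translate `S + j`, the
color at `x₀ + j` is forced by the colors at `(S \ {x₀}) + j`, where `φ` is smaller. Iterating,
the coloring of the box `[-m, m]²` is forced by its restriction to a slab `c < φ ≤ c + W` of
`O(m)` lattice points, so `P_η([-m, m]²) ≤ |𝒜| ^ O(m)`. Since `[0, su]^(t)` lies in the box with
`m = ⌈s + t⌉`, this gives `log P_η([0, su]^(t)) ≤ C s` for large `s`, uniformly in `u` and `t`.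
-/

section

variable {A : Type*}

theorem propagate_from_slab {G : Type*} [AddCommGroup G] (φ ψ : G →+ ℤ) {V : Set G}
    {P : G → Prop} {W D R : ℕ} {c : ℤ}
    (hV : ∀ v ∈ V, φ v < 0 ∧ -(W : ℤ) ≤ φ v ∧ |ψ v| ≤ D)
    (hP : ∀ p, (∀ v ∈ V, P (p + v)) → P p)
    (hbase : ∀ q, |ψ q| ≤ R → c < φ q → φ q ≤ c + W → P q) (k : ℕ) {p : G}
    (hψ : |ψ p| + D * k ≤ R) (hc : c < φ p) (hk : φ p ≤ c + W + k) : P p := by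
  induction k generalizing p with
  | zero => exact hbase p (by simpa using hψ) hc (by simpa using hk)
  | succ k ih =>
    push_cast at hψ hk
    by_cases hslab : φ p ≤ c + W
    · exact hbase p (by linarith [show (0 : ℤ) ≤ D * (k + 1) by positivity]) hc hslab
    refine hP p fun v hv => ?_
    obtain ⟨hneg, hW, hD⟩ := hV v hv
    have hψv : |ψ (p + v)| ≤ |ψ p| + D := by
      rw [map_add]
      exact (abs_add_le _ _).trans (by linarith)
    refine ih ?_ ?_ ?_
    · linarith
    · rw [map_add]; linarith
    · rw [map_add]; linarith

theorem IsGenerated.apply_add_eq {η : ℤ × ℤ → A} {S : Set (ℤ × ℤ)} {x₀ : ℤ × ℤ} (hx : x₀ ∈ S)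
    (hgen : IsGenerated η S x₀) {p n n' : ℤ × ℤ}
    (h : ∀ y ∈ S \ {x₀}, η (p + (y - x₀) + n) = η (p + (y - x₀) + n')) :
    η (p + n) = η (p + n') := by
  have hcol : IsColoring η (S \ {x₀}) (fun z => η (z + (p - x₀ + n))) := ⟨_, fun _ _ => rfl⟩
  have key := (hgen _ hcol).2 (fun z => η (z + (p - x₀ + n))) (fun z => η (z + (p - x₀ + n')))
    ⟨_, fun _ _ => rfl⟩ ⟨_, fun _ _ => rfl⟩ (fun _ _ => rfl)
    (fun y hy => by convert (h y hy).symm using 2 <;> abel) x₀ hx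
  convert key using 2 <;> abel

theorem notMem_interior_of_isMaxOn {E : Type*} [NormedAddCommGroup E] [NormedSpace ℝ E]
    {K : Set E} {f : E →L[ℝ] ℝ} (hf : f ≠ 0) {x : E} (hmax : IsMaxOn f K x) :
    x ∉ interior K := fun hx =>
  hf <| (hmax.isLocalMax (mem_interior_iff_mem_nhds.1 hx)).hasFDerivAt_eq_zero f.hasFDerivAt

theorem exists_strict_max_linear {S : Set (ℤ × ℤ)} (hfin : S.Finite) (hne : S.Nonempty) :
    ∃ N : ℕ, ∃ x₀ ∈ S, ∀ y ∈ S, y ≠ x₀ → N * y.1 + y.2 < N * x₀.1 + x₀.2 := by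
  obtain ⟨M, hM⟩ := (hfin.image fun y => |y.2|.toNat).bddAbove
  -- with `N > 2M` the second coordinate cannot compensate a change of the first
  obtain ⟨x₀, hx₀, hmax⟩ :=
    Set.exists_max_image S (fun y => ((2 * M + 1 : ℕ) : ℤ) * y.1 + y.2) hfin hne
  refine ⟨2 * M + 1, x₀, hx₀, fun y hy hne => (hmax y hy).lt_of_ne fun heq => hne ?_⟩
  have hbound : ∀ z ∈ S, |z.2| ≤ M := fun z hz => Int.toNat_le.1 (hM ⟨z, hz, rfl⟩)
  obtain ⟨hy₁, hy₂⟩ := abs_le.1 (hbound y hy)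
  obtain ⟨hx₁, hx₂⟩ := abs_le.1 (hbound x₀ hx₀)
  push_cast at heq
  have h₁ : y.1 = x₀.1 := by
    rcases lt_trichotomy y.1 x₀.1 with h | h | h
    · nlinarith
    · exact h
    · nlinarith
  exact Prod.ext h₁ (by rw [h₁] at heq; linarith)

theorem toR2_mem_frontier_convexHull {S : Set (ℤ × ℤ)} {N : ℕ} {x₀ : ℤ × ℤ} (hx₀ : x₀ ∈ S)
    (hmax : ∀ y ∈ S, N * y.1 + y.2 ≤ N * x₀.1 + x₀.2) :
    toR2 x₀ ∈ frontier (convexHull ℝ (toR2 '' S)) := by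
  let f : R2 →L[ℝ] ℝ := (N : ℝ) • EuclideanSpace.proj 0 + EuclideanSpace.proj 1
  have hf : ∀ p, f (toR2 p) = ((N * p.1 + p.2 : ℤ) : ℝ) := fun p => by simp [f, toR2]
  refine ⟨subset_closure (subset_convexHull ℝ _ ⟨x₀, hx₀, rfl⟩),
    notMem_interior_of_isMaxOn (f := f) ?_ ?_⟩
  · intro h0
    simpa [hf] using congrArg (· (toR2 (0, 1))) h0
  · refine convexHull_min ?_ (convex_halfSpace_le f.toLinearMap.isLinear _)
    rintro _ ⟨y, hy, rfl⟩
    change f (toR2 y) ≤ f (toR2 x₀)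
    rw [hf, hf]
    exact_mod_cast hmax y hy

theorem IsGeneratingSet.exists_generated_strict_max {η : ℤ × ℤ → A} {S : Set (ℤ × ℤ)}
    (hS : IsGeneratingSet η S) : ∃ N : ℕ, ∃ x₀ ∈ S,
      IsGenerated η S x₀ ∧ ∀ y ∈ S, y ≠ x₀ → N * y.1 + y.2 < N * x₀.1 + x₀.2 := by
  obtain ⟨hfin, hne, -, hgen⟩ := hS
  obtain ⟨N, x₀, hx₀, hstrict⟩ := exists_strict_max_linear hfin hne
  refine ⟨N, x₀, hx₀, hgen x₀ hx₀ <| toR2_mem_frontier_convexHull (N := N) hx₀ fun y hy => ?_,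
    hstrict⟩
  rcases eq_or_ne y x₀ with rfl | h
  exacts [le_rfl, (hstrict y hy h).le]

def Determines (η : ℤ × ℤ → A) (B F : Set (ℤ × ℤ)) : Prop :=
  ∀ n n' : ℤ × ℤ, (∀ q ∈ B, η (q + n) = η (q + n')) → ∀ p ∈ F, η (p + n) = η (p + n')

theorem Determines.mono {η : ℤ × ℤ → A} {B F F' : Set (ℤ × ℤ)} (h : Determines η B F)
    (hF : F' ⊆ F) : Determines η B F' :=
  fun n n' hB p hp => h n n' hB p (hF hp)

theorem colorCount_le_pow_card [Fintype A] {η : ℤ × ℤ → A} {F : Set (ℤ × ℤ)} {B : Finset (ℤ × ℤ)}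
    (h : Determines η B F) : colorCount η F ≤ Fintype.card A ^ B.card := by
  classical
  rw [colorCount, ← Nat.card_coe_set_eq]
  let restrictB : {f : F → A | ∃ n : ℤ × ℤ, ∀ x : F, f x = η ((x : ℤ × ℤ) + n)} → (B → A) :=
    fun f q => η (q + f.2.choose)
  have hinj : Function.Injective restrictB := by
    rintro ⟨f, hf⟩ ⟨g, hg⟩ hfg
    refine Subtype.ext (funext fun x => ?_)
    show f x = g x
    rw [hf.choose_spec x, hg.choose_spec x]
    exact h _ _ (fun q hq => congrFun hfg ⟨q, hq⟩) x x.2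
  calc _ ≤ Nat.card (B → A) := Nat.card_le_card_of_injective _ hinj
    _ = _ := by simp

/-- The lattice points `q` with `|q.1| ≤ R` and `c < N * q.1 + q.2 ≤ c + W`. -/
noncomputable def slab (N : ℕ) (c : ℤ) (W R : ℕ) : Finset (ℤ × ℤ) :=
  (Finset.Icc (-(R : ℤ)) R ×ˢ Finset.Ioc c (c + W)).image fun q => (q.1, q.2 - N * q.1)

theorem mem_slab {N : ℕ} {c : ℤ} {W R : ℕ} {q : ℤ × ℤ} (hR : |q.1| ≤ R) (hc : c < N * q.1 + q.2)
    (hW : N * q.1 + q.2 ≤ c + W) : q ∈ slab N c W R := by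
  refine Finset.mem_image.2 ⟨(q.1, N * q.1 + q.2), ?_, by simp⟩
  simp only [Finset.mem_product, Finset.mem_Icc, Finset.mem_Ioc]
  exact ⟨abs_le.1 hR, hc, hW⟩

theorem card_slab_le (N : ℕ) (c : ℤ) (W R : ℕ) : (slab N c W R).card ≤ (2 * R + 1) * W := by
  refine Finset.card_image_le.trans_eq ?_
  rw [Finset.card_product, Int.card_Icc, Int.card_Ioc]
  congr 1 <;> omega

theorem latticePts_segNbhd_subset_rect {u : R2} (hu : ‖u‖ = 1) {s t : ℝ} (hs : 0 ≤ s) {m : ℕ}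
    (hm : s + t ≤ m) : latticePts (segNbhd u s t) ⊆ rect (-m) m (-m) m := by
  rintro p ⟨w, hwseg, hdist⟩
  have hw : ‖w‖ ≤ s := by
    simpa [hu, abs_of_nonneg hs] using (convex_closedBall (0 : R2) s).segment_subset
      (Metric.mem_closedBall_self hs) (by simp [norm_smul, hu, abs_of_nonneg hs]) hwseg
  have hp : ‖toR2 p‖ ≤ m := by
    calc ‖toR2 p‖ ≤ ‖w‖ + ‖toR2 p - w‖ := norm_le_norm_add_norm_sub' _ _
      _ ≤ m := by rw [← dist_eq_norm]; linarith
  have h₀ : |(p.1 : ℝ)| ≤ m := by simpa [toR2] using (PiLp.norm_apply_le (toR2 p) 0).trans hp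
  have h₁ : |(p.2 : ℝ)| ≤ m := by simpa [toR2] using (PiLp.norm_apply_le (toR2 p) 1).trans hp
  have h₀' : |p.1| ≤ (m : ℤ) := by exact_mod_cast h₀
  have h₁' : |p.2| ≤ (m : ℤ) := by exact_mod_cast h₁
  exact ⟨(abs_le.1 h₀').1, (abs_le.1 h₀').2, (abs_le.1 h₁').1, (abs_le.1 h₁').2⟩

theorem IsGeneratingSet.exists_determines_rect {η : ℤ × ℤ → A} {S : Set (ℤ × ℤ)}
    (hS : IsGeneratingSet η S) :
    ∃ C : ℕ, ∀ m : ℕ, ∃ B : Finset (ℤ × ℤ),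
      B.card ≤ C * (m + 1) ∧ Determines η B (rect (-m) m (-m) m) := by
  obtain ⟨N, x₀, hx₀, hx₀gen, hstrict⟩ := hS.exists_generated_strict_max
  let φ : ℤ × ℤ →+ ℤ := (N : ℤ) • AddMonoidHom.fst ℤ ℤ + AddMonoidHom.snd ℤ ℤ
  have hφ : ∀ q, φ q = N * q.1 + q.2 := fun q => by simp [φ]
  let V := (· - x₀) '' (S \ {x₀})
  have hVfin : V.Finite := hS.1.sdiff.image _
  obtain ⟨W, hW⟩ := (hVfin.image fun v => (-φ v).toNat).bddAbove
  obtain ⟨D, hD⟩ := (hVfin.image fun v => |v.1|.toNat).bddAbove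
  have hV : ∀ v ∈ V, φ v < 0 ∧ -(W : ℤ) ≤ φ v ∧ |AddMonoidHom.fst ℤ ℤ v| ≤ D := by
    intro v hv
    have hvW := Int.toNat_le.1 (hW ⟨v, hv, rfl⟩)
    have hvD := Int.toNat_le.1 (hD ⟨v, hv, rfl⟩)
    obtain ⟨y, ⟨hy, hne⟩, rfl⟩ := hv
    have := hstrict y hy hne
    refine ⟨?_, by linarith, hvD⟩
    rw [hφ]
    simp only [Prod.fst_sub, Prod.snd_sub]
    linarith
  refine ⟨(2 * D + 1) * (2 * N + 3) * W, fun m => ?_⟩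
  -- `c` lies below `φ` on the rectangle; `k` steps of the stencil drift at most `D * k` sideways
  let k := 2 * (N + 1) * m + 1
  let c : ℤ := -((N + 1) * m) - 1
  refine ⟨slab N c W (m + D * k), ?_, ?_⟩
  · have hR : 2 * (m + D * k) + 1 ≤ (2 * D + 1) * (2 * N + 3) * (m + 1) := by
      simp only [k]
      nlinarith
    calc _ ≤ (2 * (m + D * k) + 1) * W := card_slab_le _ _ _ _
      _ ≤ (2 * D + 1) * (2 * N + 3) * (m + 1) * W := Nat.mul_le_mul_right W hR
      _ = _ := by ring
  · rintro n n' hB p ⟨hp₁, hp₁', hp₂, hp₂'⟩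
    refine propagate_from_slab φ (AddMonoidHom.fst ℤ ℤ) hV
      (P := fun q => η (q + n) = η (q + n'))
      (fun q hq => hx₀gen.apply_add_eq hx₀ fun y hy => hq _ ⟨y, hy, rfl⟩)
      (fun q h₁ h₂ h₃ => hB q (mem_slab h₁ (by rwa [← hφ]) (by rwa [← hφ]))) k ?_ ?_ ?_
    · simp only [AddMonoidHom.coe_fst]
      push_cast
      linarith [abs_le.2 ⟨hp₁, hp₁'⟩]
    · rw [hφ]
      nlinarith
    · rw [hφ]
      push_cast [k]
      nlinarith

theorem log_Pc_segNbhd_le [Fintype A] {η : ℤ × ℤ → A} {C : ℕ}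
    (hC : ∀ m : ℕ, ∃ B : Finset (ℤ × ℤ),
      B.card ≤ C * (m + 1) ∧ Determines η B (rect (-m) m (-m) m))
    {u : R2} (hu : ‖u‖ = 1) {s t : ℝ} (ht : 0 ≤ t) (hs : t + 2 ≤ s) :
    Real.log (Pc η (segNbhd u s t)) ≤ 2 * C * Real.log (Fintype.card A) * s := by
  have : Nonempty A := ⟨η 0⟩
  set m := ⌈s + t⌉₊
  obtain ⟨B, hBcard, hB⟩ := hC m
  have hPc : Pc η (segNbhd u s t) ≤ Fintype.card A ^ (C * (m + 1)) :=
    (colorCount_le_pow_card (hB.mono (latticePts_segNbhd_subset_rect hu (by linarith)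
      (Nat.le_ceil _)))).trans (Nat.pow_le_pow_right Fintype.card_pos hBcard)
  have hm : (m : ℝ) + 1 ≤ 2 * s := by
    linarith [Nat.ceil_lt_add_one (show 0 ≤ s + t by linarith)]
  have hlogA := Real.log_natCast_nonneg (Fintype.card A)
  rcases (Pc η (segNbhd u s t)).eq_zero_or_pos with h0 | hpos
  · rw [h0, Nat.cast_zero, Real.log_zero]
    exact mul_nonneg (by positivity) (by linarith)
  calc Real.log (Pc η (segNbhd u s t))
      ≤ Real.log ((Fintype.card A : ℝ) ^ (C * (m + 1))) :=
        Real.log_le_log (by exact_mod_cast hpos) (by exact_mod_cast hPc)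
    _ = C * ((m : ℝ) + 1) * Real.log (Fintype.card A) := by
        rw [Real.log_pow]; push_cast; ring
    _ ≤ 2 * C * Real.log (Fintype.card A) * s := by
        have : (0 : ℝ) ≤ C := C.cast_nonneg
        nlinarith [mul_nonneg this hlogA]

theorem dirEnt_le_of_eventually_log_le {η : ℤ × ℤ → A} {u : R2} {a : ℝ}
    (h : ∀ t > 0, ∀ᶠ s in atTop, Real.log (Pc η (segNbhd u s t)) ≤ a * s) :
    dirEnt η u ≤ a := by
  refine iSup_le fun t => limsup_le_of_le (by isBoundedDefault) ?_
  filter_upwards [h t t.2, eventually_gt_atTop 0] with s hs hs₀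
  exact EReal.coe_le_coe_iff.2 ((div_le_iff₀ hs₀).2 hs)

end

/-- a generating set gives uniformly bounded directional entropy. -/
theorem stmt4 {A : Type*} [Fintype A] (η : ℤ × ℤ → A)
    (hgen : ∃ S : Set (ℤ × ℤ), IsGeneratingSet η S) :
    ∃ c : ℝ, 0 < c ∧ ∀ u : R2, ‖u‖ = 1 → dirEnt η u < (c : EReal) := by
  obtain ⟨S, hS⟩ := hgen
  obtain ⟨C, hC⟩ := hS.exists_determines_rect
  set a := 2 * C * Real.log (Fintype.card A)
  have ha : 0 ≤ a := mul_nonneg (by positivity) (Real.log_natCast_nonneg _)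
  refine ⟨a + 1, by linarith, fun u hu => ?_⟩
  refine (dirEnt_le_of_eventually_log_le fun t ht => ?_).trans_lt
    (EReal.coe_lt_coe_iff.2 (lt_add_one a))
  filter_upwards [eventually_ge_atTop (t + 2)] with s hs
  exact log_Pc_segNbhd_le hC hu ht.le hs
end

section
/- Suppose there exist sequences of positive integers nᵢ, kᵢ tending to infinity such that P_η(nᵢ, kᵢ) ≤ nᵢkᵢ for all i, lim_{i→∞} (log nᵢ)/kᵢ = 0, and lim_{i→∞} (log kᵢ)/nᵢ = 0. Then h(u) = 0 for every unit vector u ∈ ℝ². -/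
open Filter Set

/-! The lattice points of the `t`-neighbourhood of a segment of length `s` in direction `u` lie
in `⌊s / δ⌋ + 1` translates of the `n × k` box as soon as `2 (δ + t) ≤ min n k`, and the colourings
of a union are determined by those of its pieces, so
`P_η([0,su]^(t)) ≤ P_η(n,k) ^ (s / δ + 1) ≤ (n k) ^ (s / δ + 1)`.
Hence `h(u) ≤ log (n k) / δ`; taking `δ = min n k / 4` along the sequence `(nᵢ, kᵢ)`, this bound is
`4 log (nᵢ kᵢ) / min nᵢ kᵢ`, which tends to `0` by the two eccentricity hypotheses. -/

open Topology

section ColorCount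

variable {A : Type*} (η : ℤ × ℤ → A)

lemma colorCount_eq_ncard_range (S : Set (ℤ × ℤ)) :
    colorCount η S = (range fun (n : ℤ × ℤ) (x : S) => η (x + n)).ncard := by
  unfold colorCount
  congr 1
  ext f
  simp [funext_iff, eq_comm]

variable [Finite A]

lemma colorCount_mono {S T : Set (ℤ × ℤ)} (hST : S ⊆ T) (hT : T.Finite) :
    colorCount η S ≤ colorCount η T := by
  have := hT.to_subtype
  rw [colorCount_eq_ncard_range, colorCount_eq_ncard_range,
    show (range fun (n : ℤ × ℤ) (x : S) => η (x + n)) =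
      (fun f x => f (inclusion hST x)) '' range fun (n : ℤ × ℤ) (x : T) => η (x + n)
      by rw [← range_comp]; rfl]
  exact ncard_image_le (toFinite _)

lemma colorCount_union_le {S T : Set (ℤ × ℤ)} (hS : S.Finite) (hT : T.Finite) :
    colorCount η (S ∪ T) ≤ colorCount η S * colorCount η T := by
  have := hS.to_subtype
  have := hT.to_subtype
  simp only [colorCount_eq_ncard_range, ← ncard_prod]
  refine ncard_le_ncard_of_injOn
    (fun f => (fun x => f (inclusion subset_union_left x),
      fun x => f (inclusion subset_union_right x))) ?_ ?_ (toFinite _)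
  · rintro _ ⟨n, rfl⟩
    exact ⟨⟨n, rfl⟩, ⟨n, rfl⟩⟩
  · intro f _ g _ hfg
    funext ⟨x, hx⟩
    rcases hx with hx | hx
    · exact congrFun (congrArg Prod.fst hfg) ⟨x, hx⟩
    · exact congrFun (congrArg Prod.snd hfg) ⟨x, hx⟩

lemma colorCount_image_add_le {S : Set (ℤ × ℤ)} (hS : S.Finite) (j : ℤ × ℤ) :
    colorCount η ((· + j) '' S) ≤ colorCount η S := by
  have := hS.to_subtype
  rw [colorCount_eq_ncard_range, colorCount_eq_ncard_range]
  refine ncard_le_ncard_of_injOn (fun f y => f ⟨y + j, mem_image_of_mem _ y.2⟩) ?_ ?_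
    (toFinite _)
  · rintro _ ⟨n, rfl⟩
    exact ⟨j + n, funext fun y => by simp [add_assoc]⟩
  · intro f _ g _ hfg
    funext ⟨_, y, hy, rfl⟩
    exact congrFun hfg ⟨y, hy⟩

lemma colorCount_biUnion_le {ι : Type*} [DecidableEq ι] (W : Finset ι) {G : ι → Set (ℤ × ℤ)}
    (hG : ∀ w ∈ W, (G w).Finite) {B : ℕ} (hB : ∀ w ∈ W, colorCount η (G w) ≤ B) :
    colorCount η (⋃ w ∈ W, G w) ≤ B ^ W.card := by
  induction W using Finset.induction_on with
  | empty =>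
    simpa [colorCount_eq_ncard_range] using
      ncard_le_one_of_subsingleton (range fun (n : ℤ × ℤ) (x : (∅ : Set (ℤ × ℤ))) => η (x + n))
  | insert a W ha ih =>
    rw [Finset.set_biUnion_insert, Finset.card_insert_of_notMem ha, pow_succ']
    simp only [Finset.mem_insert, forall_eq_or_imp] at hG hB
    calc colorCount η (G a ∪ ⋃ w ∈ W, G w)
        ≤ colorCount η (G a) * colorCount η (⋃ w ∈ W, G w) :=
          colorCount_union_le η hG.1 (W.finite_toSet.biUnion hG.2)
      _ ≤ B * B ^ W.card := Nat.mul_le_mul hB.1 (ih hG.2 hB.2)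

lemma colorCount_le_pow_of_subset_biUnion_image_add {ι : Type*} {R S : Set (ℤ × ℤ)}
    (hR : R.Finite) (W : Finset ι) (j : ι → ℤ × ℤ) (hS : S ⊆ ⋃ w ∈ W, (· + j w) '' R) :
    colorCount η S ≤ colorCount η R ^ W.card := by
  classical
  have hfin : ∀ w ∈ W, ((· + j w) '' R).Finite := fun w _ => hR.image _
  exact (colorCount_mono η hS (W.finite_toSet.biUnion hfin)).trans
    (colorCount_biUnion_le η W hfin fun w _ => colorCount_image_add_le η hR (j w))

end ColorCount

def box (n k : ℕ) : Set (ℤ × ℤ) := Ico 0 (n : ℤ) ×ˢ Ico 0 (k : ℤ)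

lemma box_finite (n k : ℕ) : (box n k).Finite := (finite_Ico _ _).prod (finite_Ico _ _)

lemma Prect_eq_colorCount_box {A : Type*} (η : ℤ × ℤ → A) (n k : ℕ) :
    Prect η n k = colorCount η (box n k) := by
  unfold Prect box
  congr 1
  ext p
  simp [and_assoc]

lemma sub_ceil_mem_Ico {x : ℤ} {a r : ℝ} {n : ℕ} (hx : |(x : ℝ) - a| < r) (hn : 2 * r ≤ n) :
    x - ⌈a - r⌉ ∈ Ico (0 : ℤ) n := by
  obtain ⟨hlo, hhi⟩ := abs_lt.1 hx
  refine ⟨sub_nonneg.2 (Int.ceil_le.2 (by linarith)), ?_⟩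
  have := Int.le_ceil (a - r)
  have : ((x - ⌈a - r⌉ : ℤ) : ℝ) < n := by push_cast; linarith
  exact_mod_cast this

lemma mem_image_add_box_of_dist_lt {p : ℤ × ℤ} {v : R2} {r : ℝ} {n k : ℕ}
    (hp : dist (toR2 p) v < r) (hn : 2 * r ≤ n) (hk : 2 * r ≤ k) :
    p ∈ (· + (⌈v 0 - r⌉, ⌈v 1 - r⌉)) '' box n k := by
  have hcoord (i : Fin 2) : |toR2 p i - v i| < r :=
    (PiLp.dist_apply_le (toR2 p) v i).trans_lt hp
  refine ⟨p - (⌈v 0 - r⌉, ⌈v 1 - r⌉), ⟨sub_ceil_mem_Ico (hcoord 0) hn,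
    sub_ceil_mem_Ico (hcoord 1) hk⟩, sub_add_cancel _ _⟩

lemma exists_dist_smul_lt_of_mem_segNbhd {u v : R2} (hu : ‖u‖ ≤ 1) {s t δ : ℝ} (hs : 0 ≤ s)
    (hδ : 0 < δ) (hv : v ∈ segNbhd u s t) :
    ∃ m ∈ Finset.range (⌊s / δ⌋₊ + 1), dist v ((m * δ) • u) < δ + t := by
  obtain ⟨_, hw, hvw⟩ := hv
  rw [segment_eq_image'] at hw
  obtain ⟨θ, ⟨hθ0, hθ1⟩, rfl⟩ := hw
  set c := θ * s
  have hc0 : 0 ≤ c := mul_nonneg hθ0 hs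
  have hcs : c ≤ s := mul_le_of_le_one_left hs hθ1
  have hm := Nat.floor_le (div_nonneg hc0 hδ.le)
  have hm' := Nat.lt_floor_add_one (c / δ)
  rw [le_div_iff₀ hδ] at hm
  rw [div_lt_iff₀ hδ] at hm'
  refine ⟨⌊c / δ⌋₊, Finset.mem_range_succ_iff.2 (Nat.floor_le_floor (by gcongr)), ?_⟩
  calc dist v ((⌊c / δ⌋₊ * δ) • u)
      ≤ dist v (c • u) + dist (c • u) ((⌊c / δ⌋₊ * δ) • u) := dist_triangle _ _ _
    _ < t + δ := by
      refine add_lt_add_of_lt_of_le (by simpa [smul_smul] using hvw) ?_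
      rw [dist_eq_norm, ← sub_smul, norm_smul, Real.norm_eq_abs, abs_of_nonneg (by linarith)]
      nlinarith [norm_nonneg u]
    _ = δ + t := add_comm _ _

lemma latticePts_segNbhd_subset {u : R2} (hu : ‖u‖ ≤ 1) {s t δ : ℝ} (hs : 0 ≤ s) (hδ : 0 < δ)
    {n k : ℕ} (hn : 2 * (δ + t) ≤ n) (hk : 2 * (δ + t) ≤ k) :
    latticePts (segNbhd u s t) ⊆ ⋃ m ∈ Finset.range (⌊s / δ⌋₊ + 1),
      (· + (⌈((m * δ) • u) 0 - (δ + t)⌉, ⌈((m * δ) • u) 1 - (δ + t)⌉)) '' box n k := by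
  intro p hp
  obtain ⟨m, hm, hdist⟩ := exists_dist_smul_lt_of_mem_segNbhd hu hs hδ hp
  exact mem_biUnion hm (mem_image_add_box_of_dist_lt hdist hn hk)

lemma Real.log_natCast_le_log_natCast {a b : ℕ} (hab : a ≤ b) : Real.log a ≤ Real.log b := by
  rcases Nat.eq_zero_or_pos a with rfl | ha
  · simpa using Real.log_natCast_nonneg b
  · exact Real.log_le_log (by exact_mod_cast ha) (by exact_mod_cast hab)

lemma EReal.limsup_coe_le_of_eventually_le_add_div {f : ℝ → ℝ} {a b : ℝ}
    (h : ∀ᶠ s in atTop, f s ≤ a + b / s) : limsup (fun s => (f s : EReal)) atTop ≤ a := by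
  have hlim : Tendsto (fun s : ℝ => a + b / s) atTop (𝓝 a) := by
    simpa using tendsto_const_nhds.add ((tendsto_const_nhds (x := b)).div_atTop tendsto_id)
  calc limsup (fun s => (f s : EReal)) atTop
      ≤ limsup (fun s => ((a + b / s : ℝ) : EReal)) atTop :=
        limsup_le_limsup (h.mono fun _ hs => EReal.coe_le_coe hs)
    _ = a := (EReal.tendsto_coe.2 hlim).limsup_eq

lemma tendsto_log_mul_div_min {ι : Type*} {l : Filter ι} {a b : ι → ℝ}
    (ha : Tendsto a l atTop) (hb : Tendsto b l atTop)
    (hab : Tendsto (fun i => Real.log (a i) / b i) l (𝓝 0))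
    (hba : Tendsto (fun i => Real.log (b i) / a i) l (𝓝 0)) :
    Tendsto (fun i => Real.log (a i * b i) / min (a i) (b i)) l (𝓝 0) := by
  have hself {c : ι → ℝ} (hc : Tendsto c l atTop) :
      Tendsto (fun i => Real.log (c i) / c i) l (𝓝 0) :=
    Real.isLittleO_log_id_atTop.tendsto_div_nhds_zero.comp hc
  have hsum := (((hself ha).add hab).add hba).add (hself hb)
  simp only [add_zero] at hsum
  refine squeeze_zero' ?_ ?_ hsum
  · filter_upwards [ha.eventually_ge_atTop 1, hb.eventually_ge_atTop 1] with i hai hbi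
    exact div_nonneg (Real.log_nonneg (one_le_mul_of_one_le_of_one_le hai hbi))
      (le_min (by linarith) (by linarith))
  · filter_upwards [ha.eventually_ge_atTop 1, hb.eventually_ge_atTop 1] with i hai hbi
    have hinv : 1 / min (a i) (b i) ≤ 1 / a i + 1 / b i := by
      have := one_div_pos.2 (zero_lt_one.trans_le hai)
      have := one_div_pos.2 (zero_lt_one.trans_le hbi)
      rcases min_choice (a i) (b i) with h | h <;> rw [h] <;> linarith
    rw [Real.log_mul (by positivity) (by positivity), div_eq_mul_one_div]
    calc (Real.log (a i) + Real.log (b i)) * (1 / min (a i) (b i))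
        ≤ (Real.log (a i) + Real.log (b i)) * (1 / a i + 1 / b i) :=
          mul_le_mul_of_nonneg_left hinv
            (add_nonneg (Real.log_nonneg hai) (Real.log_nonneg hbi))
      _ = _ := by ring

section DirectionalEntropy

variable {A : Type*} [Finite A] (η : ℤ × ℤ → A) {u : R2} (hu : ‖u‖ ≤ 1) {t δ : ℝ}
  (hδ : 0 < δ) {n k : ℕ} (hn : 2 * (δ + t) ≤ n) (hk : 2 * (δ + t) ≤ k)
include hu hδ hn hk

lemma Pc_segNbhd_le_pow {s : ℝ} (hs : 0 ≤ s) :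
    Pc η (segNbhd u s t) ≤ Prect η n k ^ (⌊s / δ⌋₊ + 1) := by
  rw [Prect_eq_colorCount_box, ← Finset.card_range (⌊s / δ⌋₊ + 1)]
  exact colorCount_le_pow_of_subset_biUnion_image_add η (box_finite n k) _ _
    (latticePts_segNbhd_subset hu hs hδ hn hk)

lemma log_Pc_segNbhd_le_s6 (hP : Prect η n k ≤ n * k) {s : ℝ} (hs : 0 ≤ s) :
    Real.log (Pc η (segNbhd u s t)) ≤ (s / δ + 1) * Real.log (n * k) := by
  have hcount : (⌊s / δ⌋₊ + 1 : ℕ) ≤ s / δ + 1 := by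
    push_cast
    linarith [Nat.floor_le (div_nonneg hs hδ.le)]
  calc Real.log (Pc η (segNbhd u s t))
      ≤ Real.log ((n * k) ^ (⌊s / δ⌋₊ + 1) : ℕ) := Real.log_natCast_le_log_natCast
        ((Pc_segNbhd_le_pow η hu hδ hn hk hs).trans (Nat.pow_le_pow_left hP _))
    _ = (⌊s / δ⌋₊ + 1 : ℕ) * Real.log (n * k) := by
        rw [Nat.cast_pow, Real.log_pow]; push_cast; rfl
    _ ≤ (s / δ + 1) * Real.log (n * k) :=
        mul_le_mul_of_nonneg_right hcount (by exact_mod_cast Real.log_natCast_nonneg (n * k))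

lemma limsup_log_Pc_segNbhd_div_le (hP : Prect η n k ≤ n * k) :
    limsup (fun s : ℝ => ((Real.log (Pc η (segNbhd u s t)) / s : ℝ) : EReal)) atTop ≤
      ((Real.log (n * k) / δ : ℝ) : EReal) := by
  refine EReal.limsup_coe_le_of_eventually_le_add_div (b := Real.log (n * k)) ?_
  filter_upwards [eventually_gt_atTop 0] with s hs
  rw [div_le_iff₀ hs]
  calc Real.log (Pc η (segNbhd u s t)) ≤ (s / δ + 1) * Real.log (n * k) :=
        log_Pc_segNbhd_le_s6 η hu hδ hn hk hP hs.le
    _ = (Real.log (n * k) / δ + Real.log (n * k) / s) * s := by field_simp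

end DirectionalEntropy

theorem stmt6_general {A : Type*} [Fintype A] (η : ℤ × ℤ → A) (n k : ℕ → ℕ)
    (hntop : Filter.Tendsto n Filter.atTop Filter.atTop)
    (hktop : Filter.Tendsto k Filter.atTop Filter.atTop)
    (hP : ∀ i, Prect η (n i) (k i) ≤ n i * k i)
    (h1 : Filter.Tendsto (fun i => Real.log (n i) / (k i : ℝ)) Filter.atTop (nhds 0))
    (h2 : Filter.Tendsto (fun i => Real.log (k i) / (n i : ℝ)) Filter.atTop (nhds 0)) :
    ∀ u : R2, ‖u‖ = 1 → dirEnt η u = 0 := by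
  intro u hu
  have hnR : Tendsto (fun i => (n i : ℝ)) atTop atTop := tendsto_natCast_atTop_atTop.comp hntop
  have hkR : Tendsto (fun i => (k i : ℝ)) atTop atTop := tendsto_natCast_atTop_atTop.comp hktop
  refine le_antisymm (iSup_le fun t => ?_) (le_iSup_of_le ⟨1, mem_Ioi.2 one_pos⟩ ?_)
  · have hbound : ∀ᶠ i in atTop,
        limsup (fun s : ℝ => ((Real.log (Pc η (segNbhd u s t)) / s : ℝ) : EReal)) atTop ≤
          ((4 * (Real.log (n i * k i) / min (n i : ℝ) (k i)) : ℝ) : EReal) := by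
      filter_upwards [hnR.eventually_ge_atTop (4 * t), hkR.eventually_ge_atTop (4 * t),
        hnR.eventually_gt_atTop 0, hkR.eventually_gt_atTop 0] with i hnt hkt hn0 hk0
      have hδ : 0 < min (n i : ℝ) (k i) / 4 := by positivity
      convert limsup_log_Pc_segNbhd_div_le η hu.le hδ (t := t) (n := n i) (k := k i)
        (by linarith [min_le_left (n i : ℝ) (k i)]) (by linarith [min_le_right (n i : ℝ) (k i)])
        (hP i) using 3
      field_simp
    have hlim := EReal.tendsto_coe.2 ((tendsto_log_mul_div_min hnR hkR h1 h2).const_mul 4)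
    rw [mul_zero] at hlim
    exact ge_of_tendsto hlim hbound
  · calc (0 : EReal) = limsup (fun _ : ℝ => (0 : EReal)) atTop := (limsup_const 0).symm
      _ ≤ _ := limsup_le_limsup <| (eventually_ge_atTop 0).mono fun s hs =>
          EReal.coe_nonneg.2 (div_nonneg (Real.log_natCast_nonneg _) hs)

/-- subexponential eccentricity gives zero directional entropy in all directions. -/
theorem stmt6 {A : Type*} [Fintype A] (η : ℤ × ℤ → A) (n k : ℕ → ℕ)
    (hn : ∀ i, 0 < n i) (hk : ∀ i, 0 < k i)
    (hntop : Filter.Tendsto n Filter.atTop Filter.atTop)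
    (hktop : Filter.Tendsto k Filter.atTop Filter.atTop)
    (hP : ∀ i, Prect η (n i) (k i) ≤ n i * k i)
    (h1 : Filter.Tendsto (fun i => Real.log (n i) / (k i : ℝ)) Filter.atTop (nhds 0))
    (h2 : Filter.Tendsto (fun i => Real.log (k i) / (n i : ℝ)) Filter.atTop (nhds 0)) :
    ∀ u : R2, ‖u‖ = 1 → dirEnt η u = 0 :=
  stmt6_general η n k hntop hktop hP h1 h2
end

section
/- Suppose P_η(n₁, k₁) ≤ n₁k₁ for some positive integers n₁, k₁. Then for each v ∈ {e₁, −e₁, e₂, −e₂} there exists a v-balanced set for η. Moreover, an e₁-balanced set and a (−e₁)-balanced set can be chosen having the same height (vertical extent), and an e₂-balanced set and a (−e₂)-balanced set can be chosen having the same width (horizontal extent). -/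
open Filter Set

/-!
If `P(n, k + 1) ≥ P(n, k) + n` held for all `n` and all `k ≥ 1`, then `P(n₁, 1) ≤ n₁`, so for
some `m` every row word of length `m + 1` would be determined by its first `m` letters. Then every
`n × 2` pattern is determined by its first `m` columns, so `P(n, 2)` stays bounded, contradicting
`P(n, 2) ≥ P(n, 1) + n`. Hence some box satisfies `P(n, k + 1) < P(n, k) + n`.

Starting from that box, delete non-generated endpoints of the bottom row one at a time. Each
deletion lowers the complexity by at least one and the bottom row by exactly one, so the
inequality persists; since it fails once the bottom row is empty, the process ends at an
`e₁`-balanced set of height `k + 1`. The other directions follow by applying this to `η` composed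
with the reflections `(x, y) ↦ (x, -y)` and `(x, y) ↦ (y, x)`, which preserve box complexities
(up to exchanging the two side lengths).
-/

namespace PlaneColoring

variable {A : Type*} {η : ℤ × ℤ → A} {S T : Set (ℤ × ℤ)}

def colorings (η : ℤ × ℤ → A) (S : Set (ℤ × ℤ)) : Set (S → A) :=
  Set.range fun n (x : S) => η (x + n)

def Determines (η : ℤ × ℤ → A) (S T : Set (ℤ × ℤ)) : Prop :=
  ∀ a b : ℤ × ℤ, (∀ x ∈ S, η (x + a) = η (x + b)) → ∀ x ∈ T, η (x + a) = η (x + b)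

theorem colorCount_eq_ncard_colorings (η : ℤ × ℤ → A) (S : Set (ℤ × ℤ)) :
    colorCount η S = (colorings η S).ncard := by
  unfold colorCount colorings
  congr 1
  ext f
  simp only [Set.mem_ofPred_eq, Set.mem_range, funext_iff, eq_comm]

theorem colorings_finite [Finite A] (η : ℤ × ℤ → A) (hS : S.Finite) : (colorings η S).Finite :=
  have := hS.to_subtype
  Set.toFinite _

theorem one_le_colorCount [Finite A] (η : ℤ × ℤ → A) (hS : S.Finite) : 1 ≤ colorCount η S := by
  rw [colorCount_eq_ncard_colorings, Nat.one_le_iff_ne_zero]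
  exact Set.ncard_ne_zero_of_mem (Set.mem_range_self 0) (colorings_finite η hS)

theorem determines_iff_colorCount_le [Finite A] (hST : S ⊆ T) (hT : T.Finite) :
    Determines η S T ↔ colorCount η T ≤ colorCount η S := by
  set r : (T → A) → (S → A) := fun f => f ∘ Set.inclusion hST
  have himage : colorings η S = r '' colorings η T :=
    Set.range_comp r fun n (x : T) => η (x + n)
  have hfin := colorings_finite η hT
  rw [colorCount_eq_ncard_colorings, colorCount_eq_ncard_colorings, himage,
    (Set.ncard_image_le hfin).ge_iff_eq, Set.ncard_image_iff hfin]
  simp only [Determines, Set.InjOn, colorings, Set.forall_mem_range, r, funext_iff,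
    Function.comp_apply, Subtype.forall, Set.inclusion_mk]

theorem forall_extendsUniquely_iff_determines (hST : S ⊆ T) :
    (∀ f, IsColoring η S f → ExtendsUniquely η S T f) ↔ Determines η S T := by
  constructor
  · intro h a b hab x hx
    exact (h _ ⟨a, fun _ _ => rfl⟩).2 _ _ ⟨a, fun _ _ => rfl⟩ ⟨b, fun _ _ => rfl⟩
      (fun _ _ => rfl) (fun y hy => (hab y hy).symm) x hx
  · rintro h f ⟨n, hf⟩
    refine ⟨⟨fun x => η (x + n), ⟨n, fun _ _ => rfl⟩, fun x hx => (hf x hx).symm⟩, ?_⟩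
    rintro g g' ⟨a, hg⟩ ⟨b, hg'⟩ hgf hg'f x hx
    rw [hg x hx, hg' x hx]
    refine h a b (fun y hy => ?_) x hx
    rw [← hg y (hST hy), ← hg' y (hST hy), hgf y hy, hg'f y hy]

theorem isGenerated_iff_determines {x : ℤ × ℤ} :
    IsGenerated η S x ↔ Determines η (S \ {x}) S :=
  forall_extendsUniquely_iff_determines Set.sdiff_subset

theorem isGenerated_of_colorCount_le [Finite A] (hS : S.Finite) {x : ℤ × ℤ}
    (h : colorCount η S ≤ colorCount η (S \ {x})) : IsGenerated η S x :=
  isGenerated_iff_determines.2 ((determines_iff_colorCount_le Set.sdiff_subset hS).2 h)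

theorem colorCount_sdiff_singleton_lt [Finite A] (hS : S.Finite) {x : ℤ × ℤ}
    (h : ¬ IsGenerated η S x) : colorCount η (S \ {x}) < colorCount η S :=
  not_le.1 fun hle => h (isGenerated_of_colorCount_le hS hle)

theorem colorCount_image_addEquiv_add (L : ℤ × ℤ ≃+ ℤ × ℤ) (j : ℤ × ℤ) (S : Set (ℤ × ℤ)) :
    colorCount η ((fun x => L x + j) '' S) = colorCount (η ∘ L) S := by
  have hinj : Function.Injective fun x => L x + j := (add_left_injective j).comp L.injective
  let e := Equiv.Set.image _ S hinj
  let Φ : ((fun x => L x + j) '' S → A) → (S → A) := fun f => f ∘ e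
  have hΦ : Function.Injective Φ := e.surjective.injective_comp_right
  have hσ : Function.Surjective fun n => L.symm (j + n) :=
    L.symm.surjective.comp (Equiv.addLeft j).surjective
  have himage : Φ '' colorings η ((fun x => L x + j) '' S) = colorings (η ∘ L) S := by
    unfold colorings
    rw [← Set.range_comp, ← hσ.range_comp (fun n (x : S) => (η ∘ L) (x + n))]
    congr 1
    funext n x
    simp [Φ, e, add_assoc]
  rw [colorCount_eq_ncard_colorings, colorCount_eq_ncard_colorings, ← himage,
    Set.ncard_image_of_injective _ hΦ]

theorem colorCount_image_addEquiv (L : ℤ × ℤ ≃+ ℤ × ℤ) (S : Set (ℤ × ℤ)) :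
    colorCount η (L '' S) = colorCount (η ∘ L) S := by
  simpa using colorCount_image_addEquiv_add L 0 S

theorem colorCount_image_add_const (j : ℤ × ℤ) (S : Set (ℤ × ℤ)) :
    colorCount η ((· + j) '' S) = colorCount η S :=
  colorCount_image_addEquiv_add (AddEquiv.refl _) j S

theorem perp_neg (w : R2) : perp (-w) = -perp w := by
  ext i; fin_cases i <;> simp [perp]

theorem Determines.image (L : ℤ × ℤ ≃+ ℤ × ℤ) (h : Determines (η ∘ L) S T) :
    Determines η (L '' S) (L '' T) := by
  rintro a b hab _ ⟨x, hx, rfl⟩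
  have key := h (L.symm a) (L.symm b) (fun y hy => ?_) x hx
  · simpa using key
  · simpa using hab (L y) ⟨y, hy, rfl⟩

theorem IsGenerated.image (L : ℤ × ℤ ≃+ ℤ × ℤ) {x : ℤ × ℤ} (h : IsGenerated (η ∘ L) S x) :
    IsGenerated η (L '' S) (L x) := by
  rw [isGenerated_iff_determines] at h ⊢
  rw [← Set.image_singleton, ← Set.image_sdiff L.injective]
  exact h.image L

section Symmetry

variable {L : ℤ × ℤ ≃+ ℤ × ℤ} {M : R2 ≃ₗᵢ[ℝ] R2}

theorem convexHull_toR2_image (hLM : ∀ p, toR2 (L p) = M (toR2 p)) (S : Set (ℤ × ℤ)) :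
    convexHull ℝ (toR2 '' (L '' S)) = M '' convexHull ℝ (toR2 '' S) := by
  rw [Set.image_image, Set.image_congr' hLM, ← Set.image_image]
  exact (M.toLinearEquiv.toLinearMap.image_convexHull _).symm

theorem toR2_mem_convexHull_image_iff (hLM : ∀ p, toR2 (L p) = M (toR2 p)) (S : Set (ℤ × ℤ))
    (p : ℤ × ℤ) :
    toR2 (L p) ∈ convexHull ℝ (toR2 '' (L '' S)) ↔ toR2 p ∈ convexHull ℝ (toR2 '' S) := by
  rw [convexHull_toR2_image hLM, hLM, M.injective.mem_set_image]

theorem IsLatticeConvex.image (hLM : ∀ p, toR2 (L p) = M (toR2 p)) (h : IsLatticeConvex S) :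
    IsLatticeConvex (L '' S) := by
  intro p hp
  rw [← L.apply_symm_apply p, toR2_mem_convexHull_image_iff hLM] at hp
  exact ⟨_, h _ hp, L.apply_symm_apply p⟩

theorem edgeSet_image (hLM : ∀ p, toR2 (L p) = M (toR2 p))
    (hM : ∀ w, perp (M w) = -M (perp w)) (u : R2) (S : Set (ℤ × ℤ)) :
    edgeSet (-M u) (L '' S) = L '' edgeSet u S := by
  have hinner : ∀ y, inner ℝ (toR2 (L y)) (perp (-M u)) = inner ℝ (toR2 y) (perp u) := by
    intro y
    rw [perp_neg, hM, neg_neg, hLM, M.inner_map_map]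
  ext x
  constructor
  · rintro ⟨⟨q, hq, rfl⟩, hmax⟩
    refine ⟨q, ⟨hq, fun r hr => ?_⟩, rfl⟩
    simpa only [hinner] using hmax (L r) ⟨r, hr, rfl⟩
  · rintro ⟨q, ⟨hq, hmax⟩, rfl⟩
    refine ⟨⟨q, hq, rfl⟩, ?_⟩
    rintro _ ⟨r, hr, rfl⟩
    simpa only [hinner] using hmax r hr

theorem exists_toR2_map_eq_add_smul_iff (hLM : ∀ p, toR2 (L p) = M (toR2 p)) (u w : R2)
    (q : ℤ × ℤ) :
    (∃ c : ℝ, toR2 (L q) = w + c • -M u) ↔ ∃ c : ℝ, toR2 q = M.symm w + c • u := by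
  have key : ∀ c : ℝ, toR2 (L q) = w + c • -M u ↔ toR2 q = M.symm w + (-c) • u := by
    intro c
    rw [hLM, ← M.eq_symm_apply, map_add, map_smul, map_neg, M.symm_apply_apply, smul_neg,
      neg_smul]
  constructor
  · rintro ⟨c, hc⟩
    exact ⟨-c, (key c).1 hc⟩
  · rintro ⟨c, hc⟩
    exact ⟨-c, (key (-c)).2 (by rwa [neg_neg])⟩

theorem IsBalanced.image (hLM : ∀ p, toR2 (L p) = M (toR2 p))
    (hM : ∀ w, perp (M w) = -M (perp w)) {u : R2} (h : IsBalanced (η ∘ L) u S) :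
    IsBalanced η (-M u) (L '' S) := by
  obtain ⟨hfin, hconv, hne, hgen, hcount, hline⟩ := h
  have hedge := edgeSet_image hLM hM u S
  refine ⟨hfin.image L, IsLatticeConvex.image hLM hconv, ?_, ?_, ?_, ?_⟩
  · rw [hedge]
    exact fun heq => hne (Set.image_injective.2 L.injective heq)
  · rintro x ⟨hxe, hxh⟩
    rw [hedge] at hxe hxh
    obtain ⟨q, hq, rfl⟩ := hxe
    rw [← Set.image_singleton, ← Set.image_sdiff L.injective,
      toR2_mem_convexHull_image_iff hLM] at hxh
    exact IsGenerated.image L (hgen q ⟨hq, hxh⟩)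
  · rw [hedge, ← Set.image_sdiff L.injective, colorCount_image_addEquiv,
      colorCount_image_addEquiv, Set.ncard_image_of_injective _ L.injective]
    exact hcount
  · intro w hw
    have hslice : {x ∈ L '' S | ∃ c : ℝ, toR2 x = w + c • -M u} =
        L '' {q ∈ S | ∃ c : ℝ, toR2 q = M.symm w + c • u} := by
      ext x
      constructor
      · rintro ⟨⟨q, hq, rfl⟩, hc⟩
        exact ⟨q, ⟨hq, (exists_toR2_map_eq_add_smul_iff hLM u w q).1 hc⟩, rfl⟩
      · rintro ⟨q, ⟨hq, hc⟩, rfl⟩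
        exact ⟨⟨q, hq, rfl⟩, (exists_toR2_map_eq_add_smul_iff hLM u w q).2 hc⟩
    rw [hslice] at hw ⊢
    rw [hedge, Set.ncard_image_of_injective _ L.injective,
      Set.ncard_image_of_injective _ L.injective]
    exact hline _ (Set.image_nonempty.1 hw)

end Symmetry

theorem rect_finite (a b c d : ℤ) : (rect a b c d).Finite :=
  ((Set.finite_Icc a b).prod (Set.finite_Icc c d)).subset
    fun _ hp => ⟨⟨hp.1, hp.2.1⟩, hp.2.2.1, hp.2.2.2⟩

theorem rect_subset_rect {a b c d a' b' c' d' : ℤ} (ha : a' ≤ a) (hb : b ≤ b') (hc : c' ≤ c)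
    (hd : d ≤ d') : rect a b c d ⊆ rect a' b' c' d' :=
  fun _ ⟨h₁, h₂, h₃, h₄⟩ => ⟨ha.trans h₁, h₂.trans hb, hc.trans h₃, h₄.trans hd⟩

theorem image_add_rect (a b c d : ℤ) (j : ℤ × ℤ) :
    (· + j) '' rect a b c d = rect (a + j.1) (b + j.1) (c + j.2) (d + j.2) := by
  ext p
  simp only [Set.image_add_right, Set.mem_preimage, rect, Set.mem_ofPred_eq, Prod.fst_add,
    Prod.snd_add, Prod.fst_neg, Prod.snd_neg]
  omega

theorem prect_eq_colorCount_rect (η : ℤ × ℤ → A) (n k : ℕ) :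
    Prect η n k = colorCount η (rect 0 (n - 1) 0 (k - 1)) := by
  unfold Prect
  congr 1
  ext p
  simp only [rect, Set.mem_ofPred_eq]
  omega

theorem one_le_prect [Finite A] (η : ℤ × ℤ → A) (n k : ℕ) : 1 ≤ Prect η n k := by
  rw [prect_eq_colorCount_rect]
  exact one_le_colorCount η (rect_finite _ _ _ _)

theorem determines_rect_of_determines_row {m : ℕ}
    (h : Determines η (rect 0 (m - 1) 0 0) (rect 0 m 0 0)) (k : ℤ) {n : ℕ} (hmn : m ≤ n) :
    Determines η (rect 0 (m - 1) 0 k) (rect 0 (n - 1) 0 k) := by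
  induction n, hmn using Nat.le_induction with
  | base => exact fun a b hab => hab
  | succ n hmn ih =>
    intro a b hab x ⟨hx₁, hx₂, hx₃, hx₄⟩
    push_cast at hx₂
    rcases (show x.1 < n ∨ x.1 = n by omega) with hlt | heq
    · exact ih a b hab x ⟨hx₁, by omega, hx₃, hx₄⟩
    · -- `x` is the last cell of the row window starting at `x - (m, 0)`
      set j : ℤ × ℤ := ((n : ℤ) - m, x.2)
      have hx : ((m : ℤ), (0 : ℤ)) + j = x := Prod.ext (by simp [j, heq]) (by simp [j])
      have key := h (j + a) (j + b) (fun y ⟨hy₁, hy₂, hy₃, hy₄⟩ => ?_) ((m : ℤ), 0)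
        ⟨by omega, le_rfl, le_rfl, le_rfl⟩
      · rwa [← add_assoc, ← add_assoc, hx] at key
      · rw [← add_assoc, ← add_assoc]
        exact ih a b hab (y + j) (show (y.1 + (n - m), y.2 + x.2) ∈ rect 0 (n - 1) 0 k from
          ⟨by omega, by omega, by omega, by omega⟩)

theorem prect_le_of_prect_succ_le [Finite A] {m : ℕ} (h : Prect η (m + 1) 1 ≤ Prect η m 1)
    (k : ℕ) {n : ℕ} (hmn : m ≤ n) : Prect η n k ≤ Prect η m k := by
  have hrow : Determines η (rect 0 (m - 1) 0 0) (rect 0 m 0 0) := by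
    refine (determines_iff_colorCount_le (rect_subset_rect le_rfl (by omega) le_rfl le_rfl)
      (rect_finite _ _ _ _)).2 ?_
    simpa [prect_eq_colorCount_rect] using h
  rw [prect_eq_colorCount_rect, prect_eq_colorCount_rect]
  exact (determines_iff_colorCount_le (rect_subset_rect le_rfl (by omega) le_rfl le_rfl)
    (rect_finite _ _ _ _)).1 (determines_rect_of_determines_row hrow _ hmn)

theorem exists_prect_succ_le [Finite A] {n k : ℕ} (h : Prect η n k ≤ n) :
    ∃ m, Prect η (m + 1) k ≤ Prect η m k := by
  by_contra! hlt
  have hgrow : ∀ m, m + 1 ≤ Prect η m k := by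
    intro m
    induction m with
    | zero => exact one_le_prect η 0 k
    | succ m ih => exact (Nat.succ_le_succ ih).trans (hlt m)
  exact absurd h (not_le.2 (hgrow n))

theorem prect_add_mul_le {n : ℕ} (hgrow : ∀ k, 1 ≤ k → Prect η n k + n ≤ Prect η n (k + 1))
    (k : ℕ) : Prect η n 1 + k * n ≤ Prect η n (k + 1) := by
  induction k with
  | zero => simp
  | succ k ih =>
    calc Prect η n 1 + (k + 1) * n = Prect η n 1 + k * n + n := by ring
      _ ≤ Prect η n (k + 1) + n := by gcongr
      _ ≤ Prect η n (k + 1 + 1) := hgrow _ (Nat.le_add_left 1 k)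

theorem exists_prect_lt [Finite A] {n₁ k₁ : ℕ} (hP : Prect η n₁ k₁ ≤ n₁ * k₁) :
    ∃ n k, 1 ≤ k ∧ Prect η n (k + 1) < Prect η n k + n := by
  by_contra! hgrow
  obtain ⟨k, rfl⟩ : ∃ k, k₁ = k + 1 := Nat.exists_eq_succ_of_ne_zero fun hk => by
    subst hk
    have := one_le_prect η n₁ 0
    rw [mul_zero] at hP
    omega
  have hrow : Prect η n₁ 1 ≤ n₁ := by
    have := prect_add_mul_le (fun k hk => hgrow n₁ k hk) k
    nlinarith
  obtain ⟨m, hm⟩ := exists_prect_succ_le hrow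
  -- two-row complexity is bounded, yet it would grow at least linearly in the width
  set n := m + Prect η m 2
  have hle : Prect η n 2 ≤ Prect η m 2 := prect_le_of_prect_succ_le hm 2 (Nat.le_add_right m _)
  have hge : Prect η n 1 + n ≤ Prect η n 2 := hgrow n 1 le_rfl
  have := one_le_prect η n 1
  omega

def halfPlane (c d r : ℤ) : Set (ℤ × ℤ) := {p | r ≤ c * p.1 + d * p.2}

theorem isLatticeConvex_halfPlane (c d r : ℤ) : IsLatticeConvex (halfPlane c d r) := by
  let H : Set R2 := {x | (r : ℝ) ≤ c * x 0 + d * x 1}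
  have hH : Convex ℝ H := convex_halfSpace_ge
    ⟨fun x y => by simp only [PiLp.add_apply]; ring,
      fun s x => by simp only [PiLp.smul_apply, smul_eq_mul]; ring⟩ _
  have hsub : toR2 '' halfPlane c d r ⊆ H := by
    rintro _ ⟨q, hq, rfl⟩
    show (r : ℝ) ≤ c * q.1 + d * q.2
    exact_mod_cast hq
  intro p hp
  have hpH : (r : ℝ) ≤ c * p.1 + d * p.2 := convexHull_min hsub hH hp
  show r ≤ c * p.1 + d * p.2
  exact_mod_cast hpH

theorem IsLatticeConvex.inter {S T : Set (ℤ × ℤ)} (hS : IsLatticeConvex S)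
    (hT : IsLatticeConvex T) : IsLatticeConvex (S ∩ T) := fun p hp =>
  ⟨hS p (convexHull_mono (Set.image_mono Set.inter_subset_left) hp),
    hT p (convexHull_mono (Set.image_mono Set.inter_subset_right) hp)⟩

theorem rect_eq_inter_halfPlane (a b c d : ℤ) : rect a b c d =
    halfPlane 1 0 a ∩ halfPlane (-1) 0 (-b) ∩ halfPlane 0 1 c ∩ halfPlane 0 (-1) (-d) := by
  ext p
  simp only [rect, halfPlane, Set.mem_inter_iff, Set.mem_ofPred_eq]
  omega

theorem isLatticeConvex_rect (a b c d : ℤ) : IsLatticeConvex (rect a b c d) := by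
  rw [rect_eq_inter_halfPlane]
  refine IsLatticeConvex.inter (IsLatticeConvex.inter (IsLatticeConvex.inter ?_ ?_) ?_) ?_ <;>
    exact isLatticeConvex_halfPlane _ _ _

def trimmedBox (w h a b : ℤ) : Set (ℤ × ℤ) := rect 0 w 1 h ∪ rect a b 0 0

variable {w h a b : ℤ}

theorem trimmedBox_eq_inter (ha : 0 ≤ a) (hb : b ≤ w) (hh : 0 ≤ h) :
    trimmedBox w h a b = rect 0 w 0 h ∩ halfPlane 1 a a ∩ halfPlane (-1) (w - b) (-b) := by
  ext ⟨x, y⟩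
  simp only [trimmedBox, rect, halfPlane, Set.mem_union, Set.mem_inter_iff, Set.mem_ofPred_eq]
  constructor
  · rintro (⟨h₁, h₂, h₃, h₄⟩ | ⟨h₁, h₂, h₃, h₄⟩)
    · refine ⟨⟨⟨h₁, h₂, by omega, h₄⟩, by nlinarith⟩, by nlinarith⟩
    · obtain rfl : y = 0 := by omega
      refine ⟨⟨⟨by omega, by omega, le_rfl, hh⟩, by omega⟩, by omega⟩
  · rintro ⟨⟨⟨h₁, h₂, h₃, h₄⟩, h₅⟩, h₆⟩
    rcases eq_or_lt_of_le h₃ with rfl | hy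
    · right
      simp only [mul_zero, add_zero, one_mul, neg_mul, neg_le_neg_iff] at h₅ h₆
      omega
    · left; omega

theorem isLatticeConvex_trimmedBox (ha : 0 ≤ a) (hb : b ≤ w) (hh : 0 ≤ h) :
    IsLatticeConvex (trimmedBox w h a b) := by
  rw [trimmedBox_eq_inter ha hb hh]
  exact IsLatticeConvex.inter (IsLatticeConvex.inter (isLatticeConvex_rect _ _ _ _)
    (isLatticeConvex_halfPlane _ _ _)) (isLatticeConvex_halfPlane _ _ _)

theorem inner_toR2_perp_e1 (p : ℤ × ℤ) : inner ℝ (toR2 p) (perp e1) = -(p.2 : ℝ) := by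
  simp [toR2, perp, e1, PiLp.inner_apply, Fin.sum_univ_two]

theorem exists_toR2_eq_add_smul_e1_iff (p : ℤ × ℤ) (v : R2) :
    (∃ c : ℝ, toR2 p = v + c • e1) ↔ (p.2 : ℝ) = v 1 := by
  constructor
  · rintro ⟨c, hc⟩
    simpa [toR2, e1] using congrArg (· 1) hc
  · intro hp
    refine ⟨p.1 - v 0, ?_⟩
    ext i
    fin_cases i <;> simp [toR2, e1, hp]

theorem toR2_mem_segment {a b x : ℤ} (hax : a ≤ x) (hxb : x ≤ b) (y : ℤ) :
    toR2 (x, y) ∈ segment ℝ (toR2 (a, y)) (toR2 (b, y)) := by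
  let f : ℝ →ᵃ[ℝ] R2 := AffineMap.lineMap (toR2 (0, y)) (toR2 (1, y))
  have hf : ∀ t : ℤ, f t = toR2 (t, y) := by
    intro t
    ext i
    fin_cases i <;> simp [f, toR2, AffineMap.lineMap_apply]
  rw [← hf, ← hf, ← hf, ← image_segment, segment_eq_Icc (by exact_mod_cast hax.trans hxb)]
  exact ⟨x, ⟨by exact_mod_cast hax, by exact_mod_cast hxb⟩, rfl⟩

theorem trimmedBox_sdiff_rect : trimmedBox w h a b \ rect a b 0 0 = rect 0 w 1 h := by
  ext p
  simp only [trimmedBox, rect, Set.mem_sdiff, Set.mem_union, Set.mem_ofPred_eq]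
  omega

theorem trimmedBox_sdiff_left : trimmedBox w h a b \ {(a, 0)} = trimmedBox w h (a + 1) b := by
  ext p
  simp only [trimmedBox, rect, Set.mem_sdiff, Set.mem_union, Set.mem_ofPred_eq,
    Set.mem_singleton_iff, Prod.ext_iff]
  omega

theorem trimmedBox_sdiff_right : trimmedBox w h a b \ {(b, 0)} = trimmedBox w h a (b - 1) := by
  ext p
  simp only [trimmedBox, rect, Set.mem_sdiff, Set.mem_union, Set.mem_ofPred_eq,
    Set.mem_singleton_iff, Prod.ext_iff]
  omega

theorem trimmedBox_of_lt (hba : b < a) : trimmedBox w h a b = rect 0 w 1 h := by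
  ext p
  simp only [trimmedBox, rect, Set.mem_union, Set.mem_ofPred_eq]
  omega

theorem trimmedBox_finite : (trimmedBox w h a b).Finite :=
  (rect_finite _ _ _ _).union (rect_finite _ _ _ _)

theorem snd_image_trimmedBox (ha : 0 ≤ a) (hab : a ≤ b) (hb : b ≤ w) (hh : 0 ≤ h) :
    Prod.snd '' trimmedBox w h a b = Set.Icc 0 h := by
  ext y
  simp only [trimmedBox, rect, Set.mem_image, Set.mem_union, Set.mem_ofPred_eq, Set.mem_Icc]
  constructor
  · rintro ⟨p, hp, rfl⟩
    omega
  · intro hy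
    rcases eq_or_lt_of_le hy.1 with rfl | hy₀
    · exact ⟨(a, 0), Or.inr ⟨le_rfl, hab, le_rfl, le_rfl⟩, rfl⟩
    · exact ⟨(0, y), Or.inl ⟨le_rfl, by omega, by omega, hy.2⟩, rfl⟩

theorem ncard_rect_row (a b : ℤ) : (rect a b 0 0).ncard = (b + 1 - a).toNat := by
  have : rect a b 0 0 = (fun x => (x, 0)) '' Set.Icc a b := by
    ext ⟨x, y⟩
    simp only [rect, Set.mem_ofPred_eq, Set.mem_image, Set.mem_Icc, Prod.ext_iff]
    constructor
    · rintro ⟨h₁, h₂, h₃, h₄⟩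
      exact ⟨x, ⟨h₁, h₂⟩, rfl, by omega⟩
    · rintro ⟨x, ⟨h₁, h₂⟩, rfl, rfl⟩
      omega
  rw [this, Set.ncard_image_of_injective _ fun x y hxy => (Prod.ext_iff.1 hxy).1,
    ← Finset.coe_Icc, Set.ncard_coe_finset, Int.card_Icc]

theorem edgeSet_e1_trimmedBox (hab : a ≤ b) :
    edgeSet e1 (trimmedBox w h a b) = rect a b 0 0 := by
  have hmem : ((a, 0) : ℤ × ℤ) ∈ trimmedBox w h a b := Or.inr ⟨le_rfl, hab, le_rfl, le_rfl⟩
  ext x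
  simp only [edgeSet, inner_toR2_perp_e1, neg_le_neg_iff, Int.cast_le, Set.mem_ofPred_eq]
  constructor
  · rintro ⟨hx | hx, hmin⟩
    · have : x.2 ≤ 0 := hmin _ hmem
      exact absurd hx.2.2.1 (by omega)
    · exact hx
  · intro hx
    refine ⟨Or.inr hx, fun y hy => ?_⟩
    rcases hy with hy | hy <;> simp only [rect, Set.mem_ofPred_eq] at hx hy <;> omega

theorem eq_or_eq_of_isEndpoint_e1_trimmedBox (hab : a ≤ b) {x : ℤ × ℤ}
    (hx : IsEndpoint e1 (trimmedBox w h a b) x) : x = (a, 0) ∨ x = (b, 0) := by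
  obtain ⟨hxE, hxhull⟩ := hx
  rw [edgeSet_e1_trimmedBox hab] at hxE hxhull
  obtain ⟨x, y⟩ := x
  obtain ⟨h₁, h₂, h₃, h₄⟩ := hxE
  obtain rfl : y = 0 := le_antisymm h₄ h₃
  by_contra! hne
  have hmem : ∀ c, a ≤ c → c ≤ b → ((x, 0) : ℤ × ℤ) ≠ (c, 0) →
      toR2 (c, 0) ∈ convexHull ℝ (toR2 '' (rect a b 0 0 \ {(x, 0)})) :=
    fun c hac hcb hxc => subset_convexHull ℝ _
      ⟨_, ⟨⟨hac, hcb, le_rfl, le_rfl⟩, Set.notMem_singleton_iff.2 hxc.symm⟩, rfl⟩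
  exact hxhull ((convex_convexHull ℝ _).segment_subset (hmem a le_rfl hab hne.1)
    (hmem b hab le_rfl hne.2) (toR2_mem_segment h₁ h₂ 0))

theorem ncard_rect_row_le_ncard_slice (ha : 0 ≤ a) (hb : b ≤ w) (v : R2)
    (hslice : {x ∈ trimmedBox w h a b | ∃ c : ℝ, toR2 x = v + c • e1}.Nonempty) :
    (rect a b 0 0).ncard ≤ {x ∈ trimmedBox w h a b | ∃ c : ℝ, toR2 x = v + c • e1}.ncard := by
  obtain ⟨x₀, hx₀, hx₀v⟩ := hslice
  rw [exists_toR2_eq_add_smul_e1_iff] at hx₀v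
  -- every row of the box contains a copy of the base row
  have hsub : (· + (0, x₀.2)) '' rect a b 0 0 ⊆
      {x ∈ trimmedBox w h a b | ∃ c : ℝ, toR2 x = v + c • e1} := by
    rw [image_add_rect]
    rintro p ⟨h₁, h₂, h₃, h₄⟩
    simp only [add_zero, zero_add] at h₁ h₂ h₃ h₄
    refine ⟨?_, (exists_toR2_eq_add_smul_e1_iff p v).2 (by rw [← hx₀v]; congr 1; omega)⟩
    rcases hx₀ with hx₀ | hx₀ <;> obtain ⟨g₁, g₂, g₃, g₄⟩ := hx₀
    · exact Or.inl ⟨by omega, by omega, by omega, by omega⟩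
    · exact Or.inr ⟨h₁, h₂, by omega, by omega⟩
  calc (rect a b 0 0).ncard = ((· + (0, x₀.2)) '' rect a b 0 0).ncard :=
        (Set.ncard_image_of_injective _ (add_left_injective _)).symm
    _ ≤ _ := Set.ncard_le_ncard hsub (trimmedBox_finite.subset fun _ hx => hx.1)

theorem isBalanced_e1_trimmedBox (ha : 0 ≤ a) (hab : a ≤ b) (hb : b ≤ w) (hh : 1 ≤ h)
    (hga : IsGenerated η (trimmedBox w h a b) (a, 0))
    (hgb : IsGenerated η (trimmedBox w h a b) (b, 0))
    (hcount : colorCount η (trimmedBox w h a b) <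
      colorCount η (rect 0 w 1 h) + (b + 1 - a).toNat) :
    IsBalanced η e1 (trimmedBox w h a b) := by
  have hedge : edgeSet e1 (trimmedBox w h a b) = rect a b 0 0 := edgeSet_e1_trimmedBox hab
  refine ⟨trimmedBox_finite, isLatticeConvex_trimmedBox ha hb (by omega), ?_, ?_, ?_, ?_⟩
  · rw [hedge]
    intro heq
    have h01 : ((0 : ℤ), (1 : ℤ)) ∈ trimmedBox w h a b := Or.inl ⟨le_rfl, by omega, le_rfl, hh⟩
    rw [heq] at h01
    exact absurd h01.2.2.2 (by norm_num)
  · intro x hx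
    rcases eq_or_eq_of_isEndpoint_e1_trimmedBox hab hx with rfl | rfl
    exacts [hga, hgb]
  · rwa [hedge, trimmedBox_sdiff_rect, ncard_rect_row]
  · intro v hv
    rw [hedge]
    exact (ncard_rect_row_le_ncard_slice ha hb v hv).trans (Nat.le_succ _)

theorem exists_isBalanced_e1_of_trimmedBox [Finite A] (hh : 1 ≤ h) {d : ℕ} (ha : 0 ≤ a)
    (hb : b ≤ w) (hd : b + 1 - a = d)
    (hlt : colorCount η (trimmedBox w h a b) < colorCount η (rect 0 w 1 h) + d) :
    ∃ S, IsBalanced η e1 S ∧ Prod.snd '' S = Set.Icc 0 h := by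
  induction d generalizing a b with
  | zero =>
    rw [trimmedBox_of_lt (by omega)] at hlt
    exact absurd hlt (lt_irrefl _)
  | succ d ih =>
    -- a non-generated endpoint can be removed without breaking the inequality
    by_cases hga : IsGenerated η (trimmedBox w h a b) (a, 0)
    · by_cases hgb : IsGenerated η (trimmedBox w h a b) (b, 0)
      · refine ⟨_, isBalanced_e1_trimmedBox ha (by omega) hb hh hga hgb ?_,
          snd_image_trimmedBox ha (by omega) hb (by omega)⟩
        rwa [show (b + 1 - a).toNat = d + 1 by omega]
      · have hrem := colorCount_sdiff_singleton_lt trimmedBox_finite hgb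
        rw [trimmedBox_sdiff_right] at hrem
        exact ih (b := b - 1) ha (by omega) (by omega) (by omega)
    · have hrem := colorCount_sdiff_singleton_lt trimmedBox_finite hga
      rw [trimmedBox_sdiff_left] at hrem
      exact ih (a := a + 1) (by omega) hb (by omega) (by omega)

theorem exists_isBalanced_e1 [Finite A] {n k : ℕ} (hk : 1 ≤ k)
    (hlt : Prect η n (k + 1) < Prect η n k + n) :
    ∃ S, IsBalanced η e1 S ∧ Prod.snd '' S = Set.Icc 0 (k : ℤ) := by
  have htop : colorCount η (rect 0 (n - 1) 1 k) = Prect η n k := by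
    rw [prect_eq_colorCount_rect, ← colorCount_image_add_const (0, 1) (rect 0 _ 0 _),
      image_add_rect]
    simp
  have hbox : trimmedBox (n - 1) k 0 (n - 1) = rect 0 (n - 1) 0 k := by
    ext p
    simp only [trimmedBox, rect, Set.mem_union, Set.mem_ofPred_eq]
    omega
  refine exists_isBalanced_e1_of_trimmedBox (by exact_mod_cast hk) le_rfl le_rfl
    (show (n : ℤ) - 1 + 1 - 0 = n by ring) ?_
  rw [hbox, htop]
  simpa [prect_eq_colorCount_rect] using hlt

def flipZ : ℤ × ℤ ≃+ ℤ × ℤ := AddEquiv.prodCongr (AddEquiv.refl ℤ) (AddEquiv.neg ℤ)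

noncomputable def flipR : R2 ≃ₗᵢ[ℝ] R2 :=
  LinearIsometryEquiv.piLpCongrRight 2 ![LinearIsometryEquiv.refl ℝ ℝ, LinearIsometryEquiv.neg ℝ]

noncomputable def swapR : R2 ≃ₗᵢ[ℝ] R2 :=
  LinearIsometryEquiv.piLpCongrLeft 2 ℝ ℝ (Equiv.swap 0 1)

@[simp] theorem flipZ_apply (p : ℤ × ℤ) : flipZ p = (p.1, -p.2) := rfl

theorem toR2_flipZ (p : ℤ × ℤ) : toR2 (flipZ p) = flipR (toR2 p) := by
  ext i; fin_cases i <;> simp [toR2, flipR]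

theorem toR2_swap (p : ℤ × ℤ) : toR2 (AddEquiv.prodComm p) = swapR (toR2 p) := by
  ext i; fin_cases i <;> simp [toR2, swapR, Equiv.piCongrLeft']

theorem perp_flipR (w : R2) : perp (flipR w) = -flipR (perp w) := by
  ext i; fin_cases i <;> simp [perp, flipR]

theorem perp_swapR (w : R2) : perp (swapR w) = -swapR (perp w) := by
  ext i; fin_cases i <;> simp [perp, swapR, Equiv.piCongrLeft']

theorem flipR_e1 : flipR e1 = e1 := by
  ext i; fin_cases i <;> simp [e1, flipR]

theorem swapR_e1 : swapR e1 = e2 := by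
  ext i; fin_cases i <;> simp [e1, e2, swapR, Equiv.piCongrLeft']

theorem prect_comp_flipZ (η : ℤ × ℤ → A) (n k : ℕ) : Prect (η ∘ flipZ) n k = Prect η n k := by
  rw [prect_eq_colorCount_rect, prect_eq_colorCount_rect,
    ← colorCount_image_addEquiv_add flipZ (0, k - 1)]
  congr 1
  ext p
  simp only [rect, Set.mem_image, Set.mem_ofPred_eq, flipZ_apply, Prod.mk_add_mk, add_zero]
  constructor
  · rintro ⟨q, hq, rfl⟩
    omega
  · intro hp
    exact ⟨(p.1, k - 1 - p.2), by omega, by ext <;> simp⟩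

theorem prect_comp_swap (η : ℤ × ℤ → A) (n k : ℕ) :
    Prect (η ∘ AddEquiv.prodComm) n k = Prect η k n := by
  rw [prect_eq_colorCount_rect, prect_eq_colorCount_rect, ← colorCount_image_addEquiv]
  congr 1
  ext p
  simp only [rect, Set.mem_image, Set.mem_ofPred_eq, AddEquiv.coe_prodComm, Prod.swap]
  constructor
  · rintro ⟨q, hq, rfl⟩
    omega
  · intro hp
    exact ⟨p.swap, by simp only [Prod.fst_swap, Prod.snd_swap]; omega, Prod.swap_swap p⟩

theorem exists_isBalanced_e1_neg_e1 [Finite A] {n₁ k₁ : ℕ} (hP : Prect η n₁ k₁ ≤ n₁ * k₁) :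
    ∃ S S' : Set (ℤ × ℤ), IsBalanced η e1 S ∧ IsBalanced η (-e1) S' ∧
      (Prod.snd '' S).ncard = (Prod.snd '' S').ncard := by
  obtain ⟨n, k, hk, hlt⟩ := exists_prect_lt hP
  obtain ⟨S, hS, hSh⟩ := exists_isBalanced_e1 hk hlt
  obtain ⟨S', hS', hS'h⟩ := exists_isBalanced_e1 (η := η ∘ flipZ) hk
    (by simpa only [prect_comp_flipZ] using hlt)
  refine ⟨S, flipZ '' S', hS, ?_, ?_⟩
  · simpa only [flipR_e1] using IsBalanced.image toR2_flipZ perp_flipR hS'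
  · have hsnd : Prod.snd '' (flipZ '' S') = Neg.neg '' (Prod.snd '' S') := by
      simp only [Set.image_image, flipZ_apply]
    rw [hsnd, Set.ncard_image_of_injective _ neg_injective, hSh, hS'h]

end PlaneColoring

open PlaneColoring in
theorem stmt7_general {A : Type*} [Fintype A] (η : ℤ × ℤ → A) (n₁ k₁ : ℕ)
    (hP : Prect η n₁ k₁ ≤ n₁ * k₁) :
    (∃ S : Set (ℤ × ℤ), IsBalanced η e1 S) ∧
    (∃ S : Set (ℤ × ℤ), IsBalanced η (-e1) S) ∧
    (∃ S : Set (ℤ × ℤ), IsBalanced η e2 S) ∧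
    (∃ S : Set (ℤ × ℤ), IsBalanced η (-e2) S) ∧
    (∃ S S' : Set (ℤ × ℤ), IsBalanced η e1 S ∧ IsBalanced η (-e1) S' ∧
      (Prod.snd '' S).ncard = (Prod.snd '' S').ncard) ∧
    (∃ S S' : Set (ℤ × ℤ), IsBalanced η e2 S ∧ IsBalanced η (-e2) S' ∧
      (Prod.fst '' S).ncard = (Prod.fst '' S').ncard) := by
  obtain ⟨S₁, S₂, h₁, h₂, hheight⟩ := exists_isBalanced_e1_neg_e1 hP
  -- the swap of coordinates exchanges `e1` with `e2` and heights with widths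
  obtain ⟨S₃, S₄, h₃, h₄, hwidth⟩ := exists_isBalanced_e1_neg_e1 (η := η ∘ AddEquiv.prodComm)
    (by rwa [prect_comp_swap, mul_comm])
  have h₃' : IsBalanced η (-e2) (AddEquiv.prodComm '' S₃) := by
    simpa only [swapR_e1] using IsBalanced.image toR2_swap perp_swapR h₃
  have h₄' : IsBalanced η e2 (AddEquiv.prodComm '' S₄) := by
    simpa only [map_neg, swapR_e1, neg_neg] using IsBalanced.image toR2_swap perp_swapR h₄
  have hfst : ∀ S : Set (ℤ × ℤ), Prod.fst '' (AddEquiv.prodComm '' S) = Prod.snd '' S := by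
    intro S
    simp only [Set.image_image, AddEquiv.coe_prodComm, Prod.fst_swap]
  exact ⟨⟨S₁, h₁⟩, ⟨S₂, h₂⟩, ⟨_, h₄'⟩, ⟨_, h₃'⟩, ⟨S₁, S₂, h₁, h₂, hheight⟩,
    ⟨_, _, h₄', h₃', by rw [hfst, hfst, hwidth]⟩⟩

/-- existence of balanced sets in the four axis directions. -/
theorem stmt7 {A : Type*} [Fintype A] (η : ℤ × ℤ → A) (n₁ k₁ : ℕ)
    (hn₁ : 0 < n₁) (hk₁ : 0 < k₁) (hP : Prect η n₁ k₁ ≤ n₁ * k₁) :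
    (∃ S : Set (ℤ × ℤ), IsBalanced η e1 S) ∧
    (∃ S : Set (ℤ × ℤ), IsBalanced η (-e1) S) ∧
    (∃ S : Set (ℤ × ℤ), IsBalanced η e2 S) ∧
    (∃ S : Set (ℤ × ℤ), IsBalanced η (-e2) S) ∧
    (∃ S S' : Set (ℤ × ℤ), IsBalanced η e1 S ∧ IsBalanced η (-e1) S' ∧
      (Prod.snd '' S).ncard = (Prod.snd '' S').ncard) ∧
    (∃ S S' : Set (ℤ × ℤ), IsBalanced η e2 S ∧ IsBalanced η (-e2) S' ∧
      (Prod.fst '' S).ncard = (Prod.fst '' S').ncard) :=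
  stmt7_general η n₁ k₁ hP
end

section
/- Let 𝒜 be a finite alphabet, a ∈ ℤ, i a positive integer, and f : {a, a+1, …, a+i−1} → 𝒜. Suppose there exists a positive integer n₀ with P_f(n₀) ≤ n₀ and i > 3n₀. Then there exists an integer p with 1 ≤ p ≤ n₀ such that f(x + p) = f(x) for every integer x with a + n₀ ≤ x and x + p ≤ a + i − n₀. -/
open Filter Set

/-! Let `R = a + i - n₀`. The number of length-`n` factors of `f` starting in `[a, R]` is `1` for
`n = 0` and grows strictly with `n` as long as some factor is right special, so `P(n₀) ≤ n₀`
yields a length `n < n₀` at which every factor determines the next letter. Among the `n₀ + 1`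
factors of length `n₀` starting at `a, …, a + n₀` two coincide, at distance `p ≤ n₀`; this is a
block of `n₀ > n` consecutive positions with period `p`, and the period then propagates to the
right one letter at a time. -/

section MorseHedlund

variable {A : Type*}

def factorAt (f : ℤ → A) (n : ℕ) (m : ℤ) : Fin n → A := fun j => f (m + (j : ℕ))

def factorsOn (f : ℤ → A) (S : Set ℤ) (n : ℕ) : Set (Fin n → A) := factorAt f n '' S

def RightDetermined (f : ℤ → A) (S : Set ℤ) (n : ℕ) : Prop :=
  ∀ m ∈ S, ∀ m' ∈ S, factorAt f n m = factorAt f n m' → f (m + n) = f (m' + n)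

section FactorCounting

variable (f : ℤ → A) {S : Set ℤ}

theorem ncard_factorsOn_zero (hS : S.Nonempty) : (factorsOn f S 0).ncard = 1 :=
  Set.ncard_eq_one.mpr ⟨fun j => j.elim0, Set.eq_singleton_iff_nonempty_unique_mem.mpr
    ⟨hS.image _, fun _ _ => funext fun j => j.elim0⟩⟩

theorem factorAt_init (n : ℕ) (m : ℤ) :
    Fin.init (factorAt f (n + 1) m) = factorAt f n m := rfl

theorem factorAt_last (n : ℕ) (m : ℤ) : factorAt f (n + 1) m (Fin.last n) = f (m + n) := rfl

variable [Finite A]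

/-- Every factor of length `n` extends to one of length `n + 1`, and a right special one
in two ways. -/
theorem ncard_factorsOn_lt_succ {n : ℕ} (h : ¬ RightDetermined f S n) :
    (factorsOn f S n).ncard < (factorsOn f S (n + 1)).ncard := by
  have hinit : Fin.init '' factorsOn f S (n + 1) = factorsOn f S n := by
    simp only [factorsOn, Set.image_image, factorAt_init]
  refine hinit ▸ (Set.ncard_image_le (Set.toFinite _)).lt_of_ne fun heq => h ?_
  intro m hm m' hm' hfac
  have := Set.injOn_of_ncard_image_eq heq (Set.toFinite _) (Set.mem_image_of_mem _ hm)
    (Set.mem_image_of_mem _ hm') (by simpa only [factorAt_init] using hfac)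
  simpa only [factorAt_last] using congrFun this (Fin.last n)

theorem exists_rightDetermined_of_ncard_factorsOn_le (hS : S.Nonempty) {N : ℕ}
    (hN : (factorsOn f S N).ncard ≤ N) : ∃ n < N, RightDetermined f S n := by
  by_contra! hbad
  have growth : ∀ k ≤ N, k + 1 ≤ (factorsOn f S k).ncard := by
    intro k
    induction k with
    | zero => intro _; rw [ncard_factorsOn_zero f hS]
    | succ k ih =>
      intro hk
      have := ncard_factorsOn_lt_succ f (hbad k (by omega))
      have := ih (by omega)
      omega
  have := growth N le_rfl
  omega

end FactorCounting

section Periodicity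

variable {f : ℤ → A} {a R : ℤ} {n : ℕ}

/-- The letter `f (x + p)` is forced by the length-`n` factor ending before it, which by
induction equals the one ending before `x`. -/
theorem RightDetermined.periodic_of_block (hf : RightDetermined f (Set.Icc a R) n)
    {m p : ℤ} (ham : a ≤ m) (hp : 0 ≤ p) (hblock : ∀ x, m ≤ x → x < m + n → f (x + p) = f x) :
    ∀ x, m ≤ x → x + p ≤ R + n → f (x + p) = f x := by
  suffices ∀ k : ℕ, ∀ x, m ≤ x → x < m + k → x + p ≤ R + n → f (x + p) = f x from
    fun x hmx hxR => this ((x - m).toNat + 1) x hmx (by omega) hxR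
  intro k
  induction k with
  | zero => intro x _ _; omega
  | succ k ih =>
    intro x hmx hxk hxR
    by_cases hx : x < m + k
    · exact ih x hmx hx hxR
    by_cases hxn : x < m + n
    · exact hblock x hmx hxn
    have hwindow : factorAt f n (x - n + p) = factorAt f n (x - n) := by
      funext j
      have := ih (x - n + (j : ℕ)) (by omega) (by omega) (by omega)
      simp only [factorAt]
      rw [add_right_comm, this]
    have := hf (x - n + p) ⟨by omega, by omega⟩ (x - n) ⟨by omega, by omega⟩ hwindow
    convert this using 2 <;> ring

end Periodicity

theorem exists_factorAt_eq_of_ncard_le [Finite A] (f : ℤ → A) {a R : ℤ} {N : ℕ}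
    (hN : (factorsOn f (Set.Icc a R) N).ncard ≤ N) (haR : a + N ≤ R) :
    ∃ m p : ℕ, 1 ≤ p ∧ m + p ≤ N ∧ factorAt f N (a + m) = factorAt f N (a + m + p) := by
  have hcard : (factorsOn f (Set.Icc a R) N).ncard < (Set.Iic N).ncard := by
    rw [← Finset.coe_Iic, Set.ncard_coe_finset, Nat.card_Iic]; omega
  obtain ⟨k, hk, l, hl, hkl, heq⟩ := Set.exists_ne_map_eq_of_ncard_lt_of_maps_to hcard
    (f := fun k : ℕ => factorAt f N (a + k))
    fun k hk => Set.mem_image_of_mem _ ⟨by omega, by have := Set.mem_Iic.mp hk; omega⟩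
  have hk := Set.mem_Iic.mp hk
  have hl := Set.mem_Iic.mp hl
  rcases hkl.lt_or_gt with h | h
  · exact ⟨k, l - k, by omega, by omega, by simpa [Nat.cast_sub h.le] using heq⟩
  · exact ⟨l, k - l, by omega, by omega, by simpa [Nat.cast_sub h.le] using heq.symm⟩

end MorseHedlund

theorem stmt8_general {A : Type*} [Fintype A] (f : ℤ → A) (a : ℤ) (i n₀ : ℕ)
    (hP : Set.ncard {w : Fin n₀ → A | ∃ m : ℤ, a ≤ m ∧ m + (n₀ : ℤ) ≤ a + (i : ℤ) ∧
        ∀ j : Fin n₀, w j = f (m + ((j : ℕ) : ℤ))} ≤ n₀)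
    (hbig : 3 * n₀ < i) :
    ∃ p : ℕ, 1 ≤ p ∧ p ≤ n₀ ∧
      ∀ x : ℤ, a + (n₀ : ℤ) ≤ x → x + (p : ℤ) ≤ a + (i : ℤ) - (n₀ : ℤ) →
        f (x + (p : ℤ)) = f x := by
  set R := a + (i : ℤ) - n₀
  have hfactors : (factorsOn f (Set.Icc a R) n₀).ncard ≤ n₀ := by
    refine le_of_eq_of_le (congrArg Set.ncard ?_) hP
    ext w
    simp only [factorsOn, factorAt, Set.mem_image, Set.mem_Icc, funext_iff, R, le_sub_iff_add_le]
    exact exists_congr fun m =>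
      and_assoc.trans (and_congr_right' (and_congr_right' (forall_congr' fun _ => eq_comm)))
  obtain ⟨n, hn, hf⟩ := exists_rightDetermined_of_ncard_factorsOn_le f
    (Set.nonempty_Icc.mpr (by omega)) hfactors
  obtain ⟨m, p, hp, hmp, heq⟩ := exists_factorAt_eq_of_ncard_le f hfactors (by omega)
  have hblock : ∀ x, a + m ≤ x → x < a + m + n → f (x + p) = f x := fun x h₁ h₂ => by
    have := congrFun heq ⟨(x - (a + m)).toNat, by omega⟩
    simp only [factorAt] at this
    convert this.symm using 2 <;> omega
  exact ⟨p, hp, by omega, fun x hx hxR =>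
    hf.periodic_of_block (by omega) (by omega) hblock x (by omega) (by omega)⟩

/-- the finite Morse–Hedlund theorem. -/
theorem stmt8 {A : Type*} [Fintype A] (f : ℤ → A) (a : ℤ) (i n₀ : ℕ)
    (hi : 0 < i) (hn₀ : 0 < n₀)
    (hP : Set.ncard {w : Fin n₀ → A | ∃ m : ℤ, a ≤ m ∧ m + (n₀ : ℤ) ≤ a + (i : ℤ) ∧
        ∀ j : Fin n₀, w j = f (m + ((j : ℕ) : ℤ))} ≤ n₀)
    (hbig : 3 * n₀ < i) :
    ∃ p : ℕ, 1 ≤ p ∧ p ≤ n₀ ∧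
      ∀ x : ℤ, a + (n₀ : ℤ) ≤ x → x + (p : ℤ) ≤ a + (i : ℤ) - (n₀ : ℤ) →
        f (x + (p : ℤ)) = f x :=
  stmt8_general f a i n₀ hP hbig
end

section
/- Let A = {10ⁿ + i² : n, i ∈ ℕ, 1 ≤ i ≤ n} ⊆ ℤ and let β : ℤ → {0,1} be the indicator function of A. Then P_β(k) ≤ (k+1)³ for every positive integer k. -/
open Filter Set

/-- The set `A = {10ⁿ + i² : n, i ∈ ℕ, 1 ≤ i ≤ n}`. -/
def Aset : Set ℤ := {x | ∃ nn ii : ℕ, 1 ≤ ii ∧ ii ≤ nn ∧ x = 10 ^ nn + (ii : ℤ) ^ 2}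

/-! A window of length `k` that meets `Aset` either starts in `(-k, k)` or has its first element
`10ⁿ + i² ≥ k` at some offset `t < k`. The blocks `{10ⁿ + j² : 1 ≤ j ≤ n}` lie in `(10ⁿ, 10ⁿ⁺¹]`,
so in the second case the rest of the window consists of the `10ⁿ + j²` with `i ≤ j ≤ n` and
`j² - i² < k - t`. Such a `j` is at most `i + k`, and for `i > k` only `j = i` qualifies, so the
window is determined by `t < k`, `1 ≤ i ≤ k` and `n - i ≤ k`. Together with the empty window this
gives at most `1 + 2k + k²(k + 1) ≤ (k + 1)³` windows. -/

lemma sq_le_ten_pow (n : ℕ) : n ^ 2 ≤ 10 ^ n :=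
  calc n ^ 2 ≤ (2 ^ n) ^ 2 := Nat.pow_le_pow_left Nat.lt_two_pow_self.le 2
    _ = 4 ^ n := by rw [← pow_mul, mul_comm, pow_mul]; norm_num
    _ ≤ 10 ^ n := Nat.pow_le_pow_left (by norm_num) n

lemma mem_Aset_iff_of_mem_Ioc {n : ℕ} {x : ℤ} (hx : x ∈ Ioc (10 ^ n) (10 ^ (n + 1))) :
    x ∈ Aset ↔ ∃ j : ℕ, 1 ≤ j ∧ j ≤ n ∧ x = 10 ^ n + (j : ℤ) ^ 2 := by
  refine ⟨?_, fun ⟨j, hj, hjn, hx⟩ => ⟨n, j, hj, hjn, hx⟩⟩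
  rintro ⟨ν, μ, hμ, hμν, rfl⟩
  have hμ_sq : (μ : ℤ) ^ 2 ≤ 10 ^ ν := by
    exact_mod_cast (Nat.pow_le_pow_left hμν 2).trans (sq_le_ten_pow ν)
  have hμ_pos : (0 : ℤ) < (μ : ℤ) ^ 2 := by positivity
  have hν_lt : (10 : ℤ) ^ ν < 10 ^ (n + 1) := by linarith [hx.2]
  have hn_lt : (10 : ℤ) ^ n < 10 ^ (ν + 1) := by rw [pow_succ]; linarith [hx.1]
  rw [pow_lt_pow_iff_right₀ (by norm_num)] at hν_lt hn_lt
  obtain rfl : ν = n := by omega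
  exact ⟨μ, hμ, hμν, rfl⟩

def windowTrace (k : ℕ) (m : ℤ) : Set (Fin k) := {p | m + ((p : ℕ) : ℤ) ∈ Aset}

/-- The positions `p` at which `10ⁿ + j² = (10ⁿ + i² - t) + p` for some `i ≤ j ≤ n`. -/
def blockPattern (k t i n : ℕ) : Set (Fin k) :=
  {p | ∃ j, i ≤ j ∧ j ≤ n ∧ j ^ 2 + t = i ^ 2 + p}

lemma windowTrace_eq_blockPattern {k t i n : ℕ} {m : ℤ} (hi : 1 ≤ i) (hin : i ≤ n)
    (hm : m + t = 10 ^ n + (i : ℤ) ^ 2) (hkm : (k : ℤ) ≤ m + t)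
    (hfirst : ∀ p < t, m + (p : ℤ) ∉ Aset) :
    windowTrace k m = blockPattern k t i n := by
  ext p
  simp only [windowTrace, blockPattern, mem_ofPred_eq]
  rcases lt_or_ge (p : ℕ) t with hpt | htp
  · refine iff_of_false (hfirst p hpt) ?_
    rintro ⟨j, hij, -, hj⟩
    have := Nat.pow_le_pow_left hij 2
    omega
  · have hp : (p : ℕ) < k := p.2
    have hn_sq : (i : ℤ) ^ 2 ≤ 10 ^ n := by
      exact_mod_cast (Nat.pow_le_pow_left hin 2).trans (sq_le_ten_pow n)
    have hi_sq : (1 : ℤ) ≤ (i : ℤ) ^ 2 := by exact_mod_cast Nat.one_le_pow _ _ hi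
    have hIoc : m + ((p : ℕ) : ℤ) ∈ Ioc (10 ^ n) (10 ^ (n + 1)) := by
      constructor <;> push_cast [pow_succ] at hp htp ⊢ <;> linarith
    rw [mem_Aset_iff_of_mem_Ioc hIoc]
    constructor
    · rintro ⟨j, -, hjn, hj⟩
      have hj' : j ^ 2 + t = i ^ 2 + p := by zify; linarith
      exact ⟨j, (Nat.pow_le_pow_iff_left two_ne_zero).1 (by omega), hjn, hj'⟩
    · rintro ⟨j, hij, hjn, hj⟩
      have hj' : ((j ^ 2 + t : ℕ) : ℤ) = ((i ^ 2 + p : ℕ) : ℤ) := congrArg _ hj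
      push_cast at hj'
      exact ⟨j, hi.trans hij, hjn, by linarith⟩

lemma blockPattern_eq_min (k t i n : ℕ) :
    blockPattern k t i n = blockPattern k t i (min n (i + k)) := by
  ext p
  simp only [blockPattern, mem_ofPred_eq, le_min_iff]
  refine exists_congr fun j => ⟨fun ⟨hij, hjn, hj⟩ => ⟨hij, ⟨hjn, ?_⟩, hj⟩,
    fun ⟨hij, ⟨hjn, _⟩, hj⟩ => ⟨hij, hjn, hj⟩⟩
  have hp : (p : ℕ) < k := p.2
  by_contra! hj_big
  nlinarith [Nat.pow_le_pow_left hj_big.le 2]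

lemma blockPattern_eq_of_le_two_mul_add_one {k t i n : ℕ} (hin : i ≤ n) (hk : k ≤ 2 * i + 1) :
    blockPattern k t i n = {p : Fin k | (p : ℕ) = t} := by
  ext p
  simp only [blockPattern, mem_ofPred_eq]
  have hp : (p : ℕ) < k := p.2
  constructor
  · rintro ⟨j, hij, -, hj⟩
    rcases hij.eq_or_lt with rfl | hij
    · omega
    · nlinarith [Nat.pow_le_pow_left hij 2]
  · intro hpt
    exact ⟨i, le_rfl, hin, by omega⟩

lemma exists_blockPattern_eq {k t i n : ℕ} (hk : 0 < k) (hi : 1 ≤ i) (hin : i ≤ n) :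
    ∃ i' ∈ Icc 1 k, ∃ d ≤ k, blockPattern k t i n = blockPattern k t i' (i' + d) := by
  rcases le_or_gt i k with hik | hki
  · refine ⟨i, ⟨hi, hik⟩, min n (i + k) - i, by omega, ?_⟩
    rw [blockPattern_eq_min, Nat.add_sub_cancel' (le_min hin (Nat.le_add_right i k))]
  · refine ⟨k, ⟨hk, le_rfl⟩, 0, k.zero_le, ?_⟩
    rw [blockPattern_eq_of_le_two_mul_add_one hin (by omega),
      blockPattern_eq_of_le_two_mul_add_one (by omega) (by omega)]

lemma windowTrace_cases (k : ℕ) (m : ℤ) :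
    windowTrace k m = ∅ ∨ m ∈ Ioo (-(k : ℤ)) k ∨
      ∃ t < k, ∃ i ∈ Icc 1 k, ∃ d ≤ k, windowTrace k m = blockPattern k t i (i + d) := by
  classical
  by_cases h : ∃ p : ℕ, p < k ∧ m + (p : ℤ) ∈ Aset
  swap
  · push Not at h
    exact Or.inl (eq_empty_of_forall_notMem fun p hp => h p p.2 hp)
  obtain ⟨ht, n, i, hi, hin, hm⟩ := Nat.find_spec h
  set t := Nat.find h
  have hfirst : ∀ p < t, m + (p : ℤ) ∉ Aset := fun p hp hpA =>
    Nat.find_min h hp ⟨hp.trans ht, hpA⟩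
  have hpos : (0 : ℤ) < m + t := by rw [hm]; positivity
  rcases lt_or_ge (m + t) k with hsmall | hlarge
  · refine Or.inr (Or.inl ⟨?_, by omega⟩)
    have : (t : ℤ) < k := by exact_mod_cast ht
    omega
  · obtain ⟨i', hi', d, hd, hpat⟩ := exists_blockPattern_eq (t := t) (Nat.zero_lt_of_lt ht) hi hin
    exact Or.inr (Or.inr ⟨t, ht, i', hi', d, hd,
      (windowTrace_eq_blockPattern hi hin hm hlarge hfirst).trans hpat⟩)

lemma exists_finset_windowTrace (k : ℕ) :
    ∃ F : Finset (Set (Fin k)), F.card ≤ (k + 1) ^ 3 ∧ ∀ m, windowTrace k m ∈ F := by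
  classical
  let params := Finset.range k ×ˢ Finset.Icc 1 k ×ˢ Finset.range (k + 1)
  refine ⟨insert ∅ ((Finset.Ioo (-(k : ℤ)) k).image (windowTrace k) ∪
    params.image fun x => blockPattern k x.1 x.2.1 (x.2.1 + x.2.2)), ?_, fun m => ?_⟩
  · have hIoo : (Finset.Ioo (-(k : ℤ)) k).card ≤ 2 * k := by rw [Int.card_Ioo]; omega
    have hparams : params.card = k * (k * (k + 1)) := by simp [params]
    calc _ ≤ 1 + ((Finset.Ioo (-(k : ℤ)) k).card + params.card) := by
          rw [add_comm 1]
          refine (Finset.card_insert_le _ _).trans (Nat.add_le_add_right ?_ 1)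
          exact (Finset.card_union_le _ _).trans (add_le_add Finset.card_image_le Finset.card_image_le)
      _ ≤ (k + 1) ^ 3 := by rw [hparams]; nlinarith
  · simp only [Finset.mem_insert, Finset.mem_union, Finset.mem_image, Finset.mem_Ioo, params,
      Finset.mem_product, Finset.mem_range, Finset.mem_Icc, Prod.exists]
    rcases windowTrace_cases k m with h | ⟨h₁, h₂⟩ | ⟨t, ht, i, hi, d, hd, h⟩
    · exact Or.inl h
    · exact Or.inr (Or.inl ⟨m, ⟨h₁, h₂⟩, rfl⟩)
    · exact Or.inr (Or.inr ⟨t, i, d, ⟨ht, hi, by omega⟩, h.symm⟩)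

theorem stmt13_general (k : ℕ) :
    Set.ncard {w : Fin k → ℕ | ∃ m : ℤ,
        ∀ j : Fin k, w j = Aset.indicator (fun _ => 1) (m + ((j : ℕ) : ℤ))} ≤
      (k + 1) ^ 3 := by
  obtain ⟨F, hF, hmem⟩ := exists_finset_windowTrace k
  let indicatorWord (S : Set (Fin k)) : Fin k → ℕ := S.indicator fun _ => 1
  have hsub : {w : Fin k → ℕ | ∃ m : ℤ,
      ∀ j : Fin k, w j = Aset.indicator (fun _ => 1) (m + ((j : ℕ) : ℤ))} ⊆
      indicatorWord '' F := by
    rintro w ⟨m, hw⟩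
    exact ⟨windowTrace k m, hmem m, funext fun j => (hw j).symm⟩
  calc _ ≤ (indicatorWord '' F).ncard := Set.ncard_le_ncard hsub (F.finite_toSet.image _)
    _ ≤ (F : Set (Set (Fin k))).ncard := Set.ncard_image_le F.finite_toSet
    _ = F.card := Set.ncard_coe_finset F
    _ ≤ (k + 1) ^ 3 := hF

/-- the indicator of `A` has cubic word complexity. -/
theorem stmt13 (k : ℕ) (hk : 0 < k) :
    Set.ncard {w : Fin k → ℕ | ∃ m : ℤ,
        ∀ j : Fin k, w j = Aset.indicator (fun _ => 1) (m + ((j : ℕ) : ℤ))} ≤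
      (k + 1) ^ 3 :=
  stmt13_general k
end

section
/- Let α : ℤ → {0,1} satisfy P_α(n) = 2ⁿ for all positive integers n, let A = {10ⁿ + i² : n, i ∈ ℕ, 1 ≤ i ≤ n}, and define η : ℤ² → {0,1} by η(i,j) = α(i+j) if j ∈ A and η(i,j) = α(i) otherwise. Then lim_{n→∞} (log P_η(n,n))/n² = 0. -/
open Filter Set

/-!
A translate of `η` restricted to an `n × k` box is determined by three finite pieces of data:
which of its `k` rows lie in `A`, a word of `α` of length `n` (read along the rows outside `A`)
and a word of `α` of length `n + k` (read along the sheared rows in `A`). Hence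
`P_η(n,n) ≤ 2ⁿ · 2ⁿ · 2²ⁿ = 16ⁿ`, so `log P_η(n,n) = O(n) = o(n²)`.
-/

theorem colorCount_le_of_factorsThrough {A D : Type*} [Finite D] (η : ℤ × ℤ → A)
    (S : Set (ℤ × ℤ)) (code : ℤ × ℤ → D)
    (h : ∀ m m', code m = code m' → ∀ x ∈ S, η (x + m) = η (x + m')) :
    colorCount η S ≤ Nat.card D := by
  set pattern : ℤ × ℤ → S → A := fun m x => η (x + m)
  have hfactor : pattern.FactorsThrough code := fun m m' hm => funext fun x => h m m' hm x x.2
  set g := Function.extend code pattern fun _ => pattern 0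
  calc colorCount η S ≤ (range g).ncard := by
        refine ncard_le_ncard ?_ (finite_range g)
        rintro f ⟨m, hm⟩
        exact ⟨code m, (hfactor.extend_apply _ m).trans (funext fun x => (hm x).symm)⟩
    _ ≤ (univ : Set D).ncard := by
        rw [← image_univ]
        exact ncard_image_le
    _ = Nat.card D := ncard_univ D

theorem Prect_le_of_rows_sheared {A : Type*} [Finite A] (α : ℤ → A) (B : Set ℤ)
    (η : ℤ × ℤ → A)
    (hη : ∀ q : ℤ × ℤ, (q.2 ∈ B → η q = α (q.1 + q.2)) ∧ (q.2 ∉ B → η q = α q.1))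
    (n k : ℕ) : Prect η n k ≤ 2 ^ k * Nat.card A ^ n * Nat.card A ^ (n + k) := by
  classical
  let code : ℤ × ℤ → (Finset.Ico 0 (k : ℤ) → Bool) × (Finset.Ico 0 (n : ℤ) → A) ×
      (Finset.Ico 0 ((n + k : ℕ) : ℤ) → A) := fun m =>
    (fun j => decide ((j : ℤ) + m.2 ∈ B), fun i => α (i + m.1), fun l => α (l + m.1 + m.2))
  have hcode : ∀ m m', code m = code m' → ∀ x ∈ {p : ℤ × ℤ | 0 ≤ p.1 ∧ p.1 < (n : ℤ) ∧
      0 ≤ p.2 ∧ p.2 < (k : ℤ)}, η (x + m) = η (x + m') := by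
    rintro m m' hm ⟨x₁, x₂⟩ ⟨h₁, h₁', h₂, h₂'⟩
    simp only [code, Prod.mk.injEq] at hm
    obtain ⟨hrow, hcol, hdiag⟩ := hm
    have hrow := congrFun hrow ⟨x₂, by simp; omega⟩
    have hcol := congrFun hcol ⟨x₁, by simp; omega⟩
    have hdiag := congrFun hdiag ⟨x₁ + x₂, by simp; omega⟩
    simp only [decide_eq_decide] at hrow hcol hdiag
    by_cases hB : x₂ + m.2 ∈ B
    · rw [(hη _).1 hB, (hη _).1 (hrow.1 hB)]
      simp only [Prod.fst_add, Prod.snd_add]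
      convert hdiag using 2 <;> ring
    · rw [(hη _).2 hB, (hη _).2 (mt hrow.2 hB)]
      exact hcol
  refine (colorCount_le_of_factorsThrough η _ code hcode).trans_eq ?_
  simp only [Nat.card_prod, Nat.card_fun, Nat.card_eq_finsetCard, Int.card_Ico, sub_zero,
    Int.toNat_natCast, Nat.card_eq_fintype_card (α := Bool), Fintype.card_bool, mul_assoc]

theorem tendsto_log_div_sq_of_le_pow (f : ℕ → ℕ) (C : ℕ) (hf : ∀ n, f n ≤ C ^ n) :
    Tendsto (fun n : ℕ => Real.log (f n) / (n : ℝ) ^ 2) atTop (nhds 0) := by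
  have hlog : ∀ n, Real.log (f n) ≤ n * Real.log C := by
    intro n
    rcases (f n).eq_zero_or_pos with h | h
    · simp only [h, Nat.cast_zero, Real.log_zero]
      positivity
    · rw [← Real.log_pow]
      exact Real.log_le_log (by exact_mod_cast h) (by exact_mod_cast hf n)
  refine squeeze_zero (fun n => div_nonneg (Real.log_natCast_nonneg _) (sq_nonneg _))
    (fun n => ?_) (tendsto_const_div_atTop_nhds_zero_nat (Real.log C))
  rcases n.eq_zero_or_pos with rfl | hn
  · simp
  calc Real.log (f n) / (n : ℝ) ^ 2 ≤ n * Real.log C / (n : ℝ) ^ 2 := by gcongr; exact hlog n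
    _ = Real.log C / n := by field_simp

theorem stmt14_general (α : ℤ → Fin 2)
    (η : ℤ × ℤ → Fin 2)
    (hη : ∀ q : ℤ × ℤ, (q.2 ∈ Aset → η q = α (q.1 + q.2)) ∧ (q.2 ∉ Aset → η q = α q.1)) :
    Filter.Tendsto (fun n : ℕ => Real.log (Prect η n n) / (n : ℝ) ^ 2)
      Filter.atTop (nhds 0) := by
  refine tendsto_log_div_sq_of_le_pow _ 16 fun n => ?_
  calc Prect η n n ≤ 2 ^ n * Nat.card (Fin 2) ^ n * Nat.card (Fin 2) ^ (n + n) :=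
        Prect_le_of_rows_sheared α Aset η hη n n
    _ = 16 ^ n := by
        rw [Nat.card_eq_fintype_card, Fintype.card_fin, show (16 : ℕ) = 2 ^ 4 from rfl, ← pow_mul]
        ring

/-- zero topological entropy of the example. -/
theorem stmt14 (α : ℤ → Fin 2) (hα : ∀ n : ℕ, 0 < n → wordCount α n = 2 ^ n)
    (η : ℤ × ℤ → Fin 2)
    (hη : ∀ q : ℤ × ℤ, (q.2 ∈ Aset → η q = α (q.1 + q.2)) ∧ (q.2 ∉ Aset → η q = α q.1)) :
    Filter.Tendsto (fun n : ℕ => Real.log (Prect η n n) / (n : ℝ) ^ 2)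
      Filter.atTop (nhds 0) :=
  stmt14_general α η hη
end

section
/- Let α : ℤ → {0,1} satisfy P_α(n) = 2ⁿ for all positive integers n, and define η : ℤ² → {0,1,2,3} by η(n,k) = α(n) for k ≠ 0 and η(n,0) = α(n) + 2. Then for every unit vector u = (u₁,u₂) ∈ ℝ² with u₁ ≠ 0, h(u) ≥ |u₁| · log 2 > 0. -/
open Filter Set

/-!
The strip `[0, su]^(1)` contains a lattice point on each of the `⌊s|u₁|⌋ + 1` consecutive
vertical lines `x = m` with `m` between `0` and `su₁` (round the point of the segment above `m`).
Since `η(m, k) ≡ α(m) mod 2`, a pattern of `η` on the strip determines the `α`-word on these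
columns, so `P_η([0, su]^(1)) ≥ P_α(⌊s|u₁|⌋ + 1) = 2^(⌊s|u₁|⌋ + 1) ≥ 2^(s|u₁|)` for every `s`.
-/

@[simp] lemma toR2_apply_zero (p : ℤ × ℤ) : toR2 p 0 = p.1 := rfl

@[simp] lemma toR2_apply_one (p : ℤ × ℤ) : toR2 p 1 = p.2 := rfl

lemma norm_le_norm_toR2 (p : ℤ × ℤ) : ‖p‖ ≤ ‖toR2 p‖ :=
  max_le (by simpa [Int.norm_eq_abs] using PiLp.norm_apply_le (toR2 p) 0)
    (by simpa [Int.norm_eq_abs] using PiLp.norm_apply_le (toR2 p) 1)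

lemma latticePts_finite_of_isBounded {K : Set R2} (hK : Bornology.IsBounded K) :
    (latticePts K).Finite := by
  obtain ⟨R, hR⟩ := hK.subset_closedBall 0
  have hbdd : Bornology.IsBounded (latticePts K) :=
    (Metric.isBounded_closedBall (x := (0 : ℤ × ℤ)) (r := R)).subset fun p hp =>
      mem_closedBall_zero_iff.2 ((norm_le_norm_toR2 p).trans (mem_closedBall_zero_iff.1 (hR hp)))
  exact (Metric.isCompact_of_isClosed_isBounded (isClosed_discrete _) hbdd).finite_of_discrete

lemma isBounded_segNbhd (u : R2) (s t : ℝ) : Bornology.IsBounded (segNbhd u s t) := by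
  have : segNbhd u s t = Metric.thickening t (segment ℝ 0 (s • u)) := by
    ext v; simp [segNbhd, Metric.mem_thickening_iff]
  rw [this]
  exact (Metric.isBounded_closedBall.subset (segment_subset_closedBall_left _ _)).thickening

lemma dist_toR2_round_lt_one (v : R2) : dist (toR2 (round (v 0), round (v 1))) v < 1 := by
  have h (x : ℝ) : dist ((round x : ℤ) : ℝ) x ^ 2 ≤ 1 / 4 := by
    have := abs_sub_round x
    rw [Real.dist_eq, abs_sub_comm]
    nlinarith [abs_nonneg (x - round x)]
  rw [EuclideanSpace.dist_eq, Fin.sum_univ_two, Real.sqrt_lt' one_pos]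
  simp only [toR2_apply_zero, toR2_apply_one]
  linarith [h (v 0), h (v 1)]

lemma exists_mem_segment_apply_zero_eq (u : R2) (s : ℝ) {x : ℝ} (hx : x ∈ uIcc 0 (s * u 0)) :
    ∃ v ∈ segment ℝ 0 (s • u), v 0 = x := by
  have h := image_segment ℝ (EuclideanSpace.proj (0 : Fin 2) : R2 →L[ℝ] ℝ).toLinearMap.toAffineMap
    0 (s • u)
  rw [segment_eq_uIcc] at h
  simp only [LinearMap.coe_toAffineMap, ContinuousLinearMap.coe_coe, EuclideanSpace.coe_proj,
    PiLp.proj_apply, PiLp.zero_apply, map_smul, smul_eq_mul] at h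
  rw [← h] at hx
  exact hx

lemma exists_int_run_mem_uIcc (a : ℝ) :
    ∃ x₀ : ℤ, ∀ j : ℕ, j ≤ ⌊|a|⌋₊ → ((x₀ + j : ℤ) : ℝ) ∈ uIcc 0 a := by
  have hfloor : (⌊|a|⌋₊ : ℝ) ≤ |a| := Nat.floor_le (abs_nonneg a)
  rcases le_total 0 a with ha | ha
  · refine ⟨0, fun j hj => ?_⟩
    have : (j : ℝ) ≤ ⌊|a|⌋₊ := by exact_mod_cast hj
    rw [uIcc_of_le ha, abs_of_nonneg ha] at *
    push_cast
    constructor <;> linarith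
  · refine ⟨-⌊|a|⌋₊, fun j hj => ?_⟩
    have : (j : ℝ) ≤ ⌊|a|⌋₊ := by exact_mod_cast hj
    rw [uIcc_of_ge ha, abs_of_nonpos ha] at *
    push_cast
    constructor <;> linarith

/-- `hS` cannot be dropped: `colorCount` is an `ncard`, which is `0` on infinite sets. -/
lemma wordCount_le_colorCount {A B : Type*} [Finite A] (α : ℤ → B) (η : ℤ × ℤ → A) (π : A → B)
    (hπ : ∀ m k, π (η (m, k)) = α m) {S : Set (ℤ × ℤ)} (hS : S.Finite) {n : ℕ} (x₀ : ℤ)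
    (k : Fin n → ℤ) (hk : ∀ j : Fin n, (x₀ + (j : ℕ), k j) ∈ S) :
    wordCount α n ≤ colorCount η S := by
  have : Finite S := hS.to_subtype
  set C := {f : S → A | ∃ n : ℤ × ℤ, ∀ x : S, f x = η ((x : ℤ × ℤ) + n)}
  have hsub : {w : Fin n → B | ∃ m : ℤ, ∀ j : Fin n, w j = α (m + (j : ℕ))} ⊆
      (fun f j => π (f ⟨_, hk j⟩)) '' C := by
    rintro w ⟨m, hm⟩
    refine ⟨fun x => η ((x : ℤ × ℤ) + (m - x₀, 0)), ⟨_, fun _ => rfl⟩, funext fun j => ?_⟩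
    simp only [Prod.mk_add_mk, add_zero, hπ, hm]
    ring_nf
  exact (Set.ncard_le_ncard hsub (C.toFinite.image _)).trans (Set.ncard_image_le C.toFinite)

lemma two_pow_le_Pc_segNbhd (α : ℤ → Fin 4) (hα01 : ∀ x : ℤ, α x = 0 ∨ α x = 1)
    (hα : ∀ n : ℕ, 0 < n → wordCount α n = 2 ^ n) (η : ℤ × ℤ → Fin 4)
    (hη : ∀ n k : ℤ, (k ≠ 0 → η (n, k) = α n) ∧ η (n, 0) = α n + 2) (u : R2) (s : ℝ) :
    2 ^ (⌊|s * u 0|⌋₊ + 1) ≤ Pc η (segNbhd u s 1) := by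
  have hmod2 (m k : ℤ) : η (m, k) % 2 = α m := by
    rcases eq_or_ne k 0 with rfl | hk
    · rw [(hη m 0).2]; rcases hα01 m with h | h <;> rw [h] <;> decide
    · rw [(hη m k).1 hk]; rcases hα01 m with h | h <;> rw [h] <;> decide
  obtain ⟨x₀, hx₀⟩ := exists_int_run_mem_uIcc (s * u 0)
  have hpts (j : Fin (⌊|s * u 0|⌋₊ + 1)) :
      ∃ k, (x₀ + (j : ℕ), k) ∈ latticePts (segNbhd u s 1) := by
    obtain ⟨v, hv, hv0⟩ := exists_mem_segment_apply_zero_eq u s (hx₀ j (Nat.lt_succ_iff.1 j.2))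
    refine ⟨round (v 1), v, hv, ?_⟩
    simpa [hv0] using dist_toR2_round_lt_one v
  choose k hk using hpts
  rw [← hα _ (Nat.succ_pos _)]
  exact wordCount_le_colorCount α η (· % 2) hmod2
    (latticePts_finite_of_isBounded (isBounded_segNbhd u s 1)) x₀ k hk

lemma le_dirEnt_of_eventually_le {A : Type*} {η : ℤ × ℤ → A} {u : R2} {c t : ℝ} (ht : 0 < t)
    (h : ∀ᶠ s in atTop, c ≤ Real.log (Pc η (segNbhd u s t)) / s) : (c : EReal) ≤ dirEnt η u :=
  le_iSup_of_le (⟨t, ht⟩ : Ioi (0 : ℝ))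
    (le_limsup_of_frequently_le' (h.mono fun _ hs => EReal.coe_le_coe_iff.2 hs).frequently)

/-- positive directional entropy in all non-vertical directions. -/
theorem stmt17 (α : ℤ → Fin 4) (hα01 : ∀ x : ℤ, α x = 0 ∨ α x = 1)
    (hα : ∀ n : ℕ, 0 < n → wordCount α n = 2 ^ n)
    (η : ℤ × ℤ → Fin 4)
    (hη : ∀ n k : ℤ, (k ≠ 0 → η (n, k) = α n) ∧ η (n, 0) = α n + 2) :
    ∀ u : R2, ‖u‖ = 1 → u 0 ≠ 0 →
      ((|u 0| * Real.log 2 : ℝ) : EReal) ≤ dirEnt η u ∧ 0 < |u 0| * Real.log 2 := by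
  intro u _ hu0
  refine ⟨le_dirEnt_of_eventually_le one_pos ((eventually_gt_atTop 0).mono fun s hs => ?_),
    mul_pos (abs_pos.2 hu0) (Real.log_pos one_lt_two)⟩
  set N := ⌊|s * u 0|⌋₊
  have hP : (2 : ℝ) ^ (N + 1) ≤ Pc η (segNbhd u s 1) := by
    exact_mod_cast two_pow_le_Pc_segNbhd α hα01 hα η hη u s
  rw [le_div_iff₀ hs]
  calc |u 0| * Real.log 2 * s = |s * u 0| * Real.log 2 := by rw [abs_mul, abs_of_pos hs]; ring
    _ ≤ (N + 1 : ℕ) * Real.log 2 := by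
      gcongr; push_cast; exact (Nat.lt_floor_add_one _).le
    _ ≤ Real.log (Pc η (segNbhd u s 1)) := by
      rw [← Real.log_pow]; exact Real.log_le_log (by positivity) hP
end
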